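/- arXiv:2106.13826 — 3 statements merged into one kernel-verified Lean document; each statement's English description precedes it below -/
import Mathlib

section
/- Let Z be a zone of a finite Σ°-labeled graph such that Z contains no directed cycle among its included edges. If every bad vertex of Z is relabeled with ⊥, then the resulting rooted graph is isomorphic to the term encoding t° of some linear term t over Σ. -/
open CategoryTheory
open Classical

noncomputable section

/-- Labeled graphs over a label type `W`. -/
structure LGraph (W : Type) : Type 1 where
  V : Type
  E : Type
  src : E → V
  tgt : E → V
  lV : V → W
  lE : E → W

section Cat

variable {W : Type} [Preorder W]

/-- Label-nondecreasing graph premorphisms: the morphisms of the category `Graph^(L,≤)`. -/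
structure GLHom (G H : LGraph W) : Type where
  onV : G.V → H.V
  onE : G.E → H.E
  src_comm : ∀ e, H.src (onE e) = onV (G.src e)
  tgt_comm : ∀ e, H.tgt (onE e) = onV (G.tgt e)
  lV_le : ∀ v, G.lV v ≤ H.lV (onV v)
  lE_le : ∀ e, G.lE e ≤ H.lE (onE e)

theorem GLHom.ext' {G H : LGraph W} {f g : GLHom G H}
    (h1 : f.onV = g.onV) (h2 : f.onE = g.onE) : f = g := by
  cases f; cases g
  cases h1; cases h2
  rfl

/-- The category `Graph^(L,≤)` of labeled graphs over a preordered label set. -/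
instance : Category (LGraph W) where
  Hom G H := GLHom G H
  id G := { onV := id, onE := id, src_comm := fun _ => rfl, tgt_comm := fun _ => rfl,
            lV_le := fun _ => le_refl _, lE_le := fun _ => le_refl _ }
  comp f g :=
    { onV := g.onV ∘ f.onV
      onE := g.onE ∘ f.onE
      src_comm := fun e => by
        simp only [Function.comp_apply, g.src_comm, f.src_comm]
      tgt_comm := fun e => by
        simp only [Function.comp_apply, g.tgt_comm, f.tgt_comm]
      lV_le := fun v => le_trans (f.lV_le v) (g.lV_le _)
      lE_le := fun e => le_trans (f.lE_le e) (g.lE_le _) }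
  id_comp f := GLHom.ext' rfl rfl
  comp_id f := GLHom.ext' rfl rfl
  assoc f g h := GLHom.ext' rfl rfl

/-- Vertex map of a morphism. -/
abbrev homV {G H : LGraph W} (f : G ⟶ H) : G.V → H.V := GLHom.onV f

/-- Edge map of a morphism. -/
abbrev homE {G H : LGraph W} (f : G ⟶ H) : G.E → H.E := GLHom.onE f

end Cat

/-- A graph is finite if it has finitely many vertices and edges. -/
def FiniteG {W : Type} (G : LGraph W) : Prop := Finite G.V ∧ Finite G.E
/-- The flat lattice on a base label set `A`: a global minimum `⊥`, a global
maximum `⊤`, and all elements of `A` pairwise incomparable. -/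
inductive Flat (A : Type) : Type
  | bot : Flat A
  | el : A → Flat A
  | top : Flat A

namespace Flat

def le {A : Type} : Flat A → Flat A → Prop
  | bot, _ => True
  | _, top => True
  | el a, el b => a = b
  | _, _ => False

instance (A : Type) : Preorder (Flat A) where
  le := Flat.le
  le_refl a := by cases a <;> trivial
  le_trans a b c hab hbc := by
    cases a <;> cases b <;> cases c <;> simp_all [Flat.le]

theorem bot_le {A : Type} (a : Flat A) : (Flat.bot : Flat A) ≤ a := by
  show Flat.le Flat.bot a
  cases a <;> trivial

theorem le_top {A : Type} (a : Flat A) : a ≤ (Flat.top : Flat A) := by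
  show Flat.le a Flat.top
  cases a <;> trivial

theorem le_cases {A : Type} {a b : Flat A} (h : a = Flat.bot ∨ b = Flat.top) : a ≤ b := by
  rcases h with h | h
  · subst h; exact bot_le _
  · subst h; exact le_top _

end Flat

/-- The flat lattice `Σ°` induced by a signature `S` together with the
positive natural numbers (used as edge labels). -/
abbrev FlatL (S : Type) := Flat (S ⊕ ℕ+)
/-- First-order terms over a signature `S` with arity function `ar` and
variable set `X`. -/
inductive Term (S : Type) (ar : S → ℕ) (X : Type) : Type
  | var : X → Term S ar X
  | app : (f : S) → (Fin (ar f) → Term S ar X) → Term S ar X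

namespace Term

variable {S : Type} {ar : S → ℕ} {X : Type}

/-- The subterm of `t` at a position (a list of (0-based) child indices),
if the position exists in `t`. -/
def sub? : Term S ar X → List ℕ → Option (Term S ar X)
  | t, [] => some t
  | .var _, _ :: _ => none
  | .app f ts, i :: p => if h : i < ar f then sub? (ts ⟨i, h⟩) p else none

/-- The set of variables occurring in a term. -/
def vars (t : Term S ar X) : Set X := {x | ∃ p, t.sub? p = some (.var x)}

/-- A term is linear if every variable occurs at most once in it. -/
def Linear (t : Term S ar X) : Prop :=
  ∀ x p q, t.sub? p = some (.var x) → t.sub? q = some (.var x) → p = q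

/-- The head symbol of a term, if any. -/
def head? : Term S ar X → Option S
  | .var _ => none
  | .app f _ => some f

/-- The function symbol at position `p` of `t`, if any. -/
def symAt (t : Term S ar X) (p : List ℕ) : Option S := (t.sub? p).bind head?

theorem sub?_append (t : Term S ar X) (p q : List ℕ) :
    t.sub? (p ++ q) = (t.sub? p).bind (fun s => s.sub? q) := by
  induction p generalizing t with
  | nil => simp [sub?]
  | cons i p ih =>
    cases t with
    | var x => simp [sub?]
    | app f ts =>
      show sub? (.app f ts) (i :: (p ++ q)) = _
      simp only [sub?]
      by_cases h : i < ar f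
      · simp [h, ih]
      · simp [h]

theorem symAt_sub (t : Term S ar X) {p : List ℕ} {f : S} (h : t.symAt p = some f) :
    ∃ ts : Fin (ar f) → Term S ar X, t.sub? p = some (.app f ts) := by
  unfold symAt at h
  cases hs : t.sub? p with
  | none => rw [hs] at h; simp at h
  | some s =>
    rw [hs] at h
    cases s with
    | var x => simp [head?] at h
    | app g ts =>
      simp [head?] at h
      subst h
      exact ⟨ts, rfl⟩

theorem edge_sub?_isSome (t : Term S ar X) {p : List ℕ} {i : ℕ}
    (h : ∃ f, t.symAt p = some f ∧ i < ar f) :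
    ∃ s, t.sub? (p ++ [i]) = some s := by
  obtain ⟨f, hf, hi⟩ := h
  obtain ⟨ts, hts⟩ := t.symAt_sub hf
  refine ⟨ts ⟨i, hi⟩, ?_⟩
  rw [sub?_append, hts]
  simp [sub?, hi]

theorem edge_tgt_var (t : Term S ar X) {p : List ℕ} {i : ℕ}
    (h : ∃ f, t.symAt p = some f ∧ i < ar f)
    (hn : ¬ (t.symAt (p ++ [i])).isSome) :
    ∃ x, t.sub? (p ++ [i]) = some (.var x) := by
  obtain ⟨s, hs⟩ := t.edge_sub?_isSome h
  cases s with
  | var x => exact ⟨x, hs⟩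
  | app g ts => exact absurd (by simp [symAt, hs, head?]) hn

theorem root_var (t : Term S ar X) (h : ¬ (t.symAt []).isSome) :
    ∃ x, t.sub? [] = some (.var x) := by
  cases t with
  | var x => exact ⟨x, rfl⟩
  | app f ts => exact absurd (by simp [symAt, sub?, head?]) h

/-- Vertices of the term encoding: symbol vertices (named by their position)
and variable heads (named by their variable). -/
def encV (t : Term S ar X) : Type :=
  {p : List ℕ // (t.symAt p).isSome} ⊕ {x : X // x ∈ t.vars}

/-- Edges of the term encoding: pairs of a symbol position and a child index. -/
def encE (t : Term S ar X) : Type :=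
  {pi : List ℕ × ℕ // ∃ f, t.symAt pi.1 = some f ∧ pi.2 < ar f}

/-- Target of an edge of the term encoding. -/
noncomputable def encTgt (t : Term S ar X) (e : t.encE) : t.encV :=
  if h : (t.symAt (e.1.1 ++ [e.1.2])).isSome then Sum.inl ⟨e.1.1 ++ [e.1.2], h⟩
  else Sum.inr ⟨Classical.choose (t.edge_tgt_var e.2 h),
    ⟨e.1.1 ++ [e.1.2], Classical.choose_spec (t.edge_tgt_var e.2 h)⟩⟩

/-- The term encoding `t°` of a term `t` as a `Σ°`-labeled graph. -/
noncomputable def enc (t : Term S ar X) : LGraph (FlatL S) where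
  V := t.encV
  E := t.encE
  src e := Sum.inl ⟨e.1.1, by obtain ⟨f, hf, _⟩ := e.2; simp [hf]⟩
  tgt := t.encTgt
  lV v := match v with
    | .inl q => (t.symAt q.1).elim Flat.bot (fun f => Flat.el (Sum.inl f))
    | .inr _ => Flat.bot
  lE e := Flat.el (Sum.inr ⟨e.1.2 + 1, Nat.succ_pos _⟩)

/-- The root of the term encoding (the vertex at position `ε`). -/
noncomputable def encRoot (t : Term S ar X) : t.encV :=
  if h : (t.symAt []).isSome then Sum.inl ⟨[], h⟩
  else Sum.inr ⟨Classical.choose (t.root_var h), ⟨[], Classical.choose_spec (t.root_var h)⟩⟩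

/-- `t.encVertAt p v` says that `v` is the vertex at position `p` in the term
encoding `t°`. -/
def encVertAt (t : Term S ar X) (p : List ℕ) : t.encV → Prop
  | .inl q => q.1 = p
  | .inr x => t.sub? p = some (.var x.1)

/-- The set of variable heads of a term encoding. -/
def varHeads (t : Term S ar X) : Set t.encV := Set.range Sum.inr

/-- Applying a substitution to a term. -/
def subst (σ : X → Term S ar X) : Term S ar X → Term S ar X
  | .var x => σ x
  | .app f ts => .app f (fun i => subst σ (ts i))

end Term

/-- One-hole contexts over a signature. `app f i ts C` is the context
`f(ts 0, …, C, …, ts (n-1))` with `C` at argument position `i`. -/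
inductive Ctx (S : Type) (ar : S → ℕ) (X : Type) : Type
  | hole : Ctx S ar X
  | app : (f : S) → (i : Fin (ar f)) → (Fin (ar f) → Term S ar X) → Ctx S ar X → Ctx S ar X

namespace Ctx

variable {S : Type} {ar : S → ℕ} {X : Type}

/-- Replacing the hole of a context by a term. -/
def fill : Ctx S ar X → Term S ar X → Term S ar X
  | .hole, t => t
  | .app f i ts C, t => .app f (Function.update ts i (C.fill t))

/-- The position of the hole of a context. -/
def holePos : Ctx S ar X → List ℕ
  | .hole => []
  | .app _ i _ C => (i : ℕ) :: C.holePos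

end Ctx

/-- A term rewrite rule `lhs → rhs`: `lhs` is not a variable and all variables
of `rhs` occur in `lhs`. -/
structure TRSRule (S : Type) (ar : S → ℕ) (X : Type) : Type where
  lhs : Term S ar X
  rhs : Term S ar X
  lhs_not_var : ∀ x, lhs ≠ Term.var x
  var_cond : rhs.vars ⊆ lhs.vars

namespace TRSRule

variable {S : Type} {ar : S → ℕ} {X : Type}

/-- A rule is linear if both sides are linear terms. -/
def Linear (ρ : TRSRule S ar X) : Prop := ρ.lhs.Linear ∧ ρ.rhs.Linear

/-- The rewrite step relation generated by a single rule. -/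
def Step (ρ : TRSRule S ar X) (s t : Term S ar X) : Prop :=
  ∃ (C : Ctx S ar X) (σ : X → Term S ar X),
    s = C.fill (ρ.lhs.subst σ) ∧ t = C.fill (ρ.rhs.subst σ)

/-- The rewrite step relation of a rule at a fixed position `p`. -/
def StepAt (ρ : TRSRule S ar X) (p : List ℕ) (s t : Term S ar X) : Prop :=
  ∃ (C : Ctx S ar X) (σ : X → Term S ar X),
    C.holePos = p ∧ s = C.fill (ρ.lhs.subst σ) ∧ t = C.fill (ρ.rhs.subst σ)

end TRSRule

/-- The rewrite relation of a term rewriting system. -/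
def TStep {S : Type} {ar : S → ℕ} {X : Type} (Rs : Set (TRSRule S ar X))
    (s t : Term S ar X) : Prop :=
  ∃ ρ ∈ Rs, ρ.Step s t
section Closures

variable {A : Type}

/-- Upper context closure `C[G]` of a graph rooted at `r`: adds a `⊤`-labeled
context vertex with a `⊤`-labeled edge to the root and a `⊤`-labeled loop. -/
def upperCC (G : LGraph (Flat A)) (r : G.V) : LGraph (Flat A) where
  V := G.V ⊕ Unit
  E := G.E ⊕ Bool
  src e := match e with
    | .inl e => .inl (G.src e)
    | .inr _ => .inr ()
  tgt e := match e with
    | .inl e => .inl (G.tgt e)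
    | .inr true => .inl r
    | .inr false => .inr ()
  lV v := match v with
    | .inl v => G.lV v
    | .inr _ => Flat.top
  lE e := match e with
    | .inl e => G.lE e
    | .inr _ => Flat.top

/-- Lower context closure `G↓_Xs`: relabels every vertex in `Xs` to `⊤` and
adds for it a fresh `⊤`-labeled vertex `x'` with a `⊤`-labeled edge `x → x'`
and a `⊤`-labeled loop on `x'`. -/
noncomputable def lowerCC (G : LGraph (Flat A)) (Xs : Set G.V) : LGraph (Flat A) where
  V := G.V ⊕ Xs
  E := G.E ⊕ (Xs ⊕ Xs)
  src e := match e with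
    | .inl e => .inl (G.src e)
    | .inr (.inl x) => .inl x.1
    | .inr (.inr x) => .inr x
  tgt e := match e with
    | .inl e => .inl (G.tgt e)
    | .inr (.inl x) => .inr x
    | .inr (.inr x) => .inr x
  lV v := match v with
    | .inl v => if v ∈ Xs then Flat.top else G.lV v
    | .inr _ => Flat.top
  lE e := match e with
    | .inl e => G.lE e
    | .inr _ => Flat.top

/-- The context closure `C[G↓_Xs]` of a rooted graph. -/
noncomputable def ctxCC (G : LGraph (Flat A)) (r : G.V) (Xs : Set G.V) : LGraph (Flat A) :=
  upperCC (lowerCC G Xs) (Sum.inl r)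

theorem ctxCC_lV_inl (G : LGraph (Flat A)) (r : G.V) (Xs : Set G.V) (v : G.V) :
    (ctxCC G r Xs).lV (Sum.inl (Sum.inl v)) = if v ∈ Xs then Flat.top else G.lV v := rfl

/-- The typing morphism `G ↣ C[G↓_Xs]` (an inclusion). -/
noncomputable def tCC (G : LGraph (Flat A)) (r : G.V) (Xs : Set G.V) :
    GLHom G (ctxCC G r Xs) where
  onV v := Sum.inl (Sum.inl v)
  onE e := Sum.inl (Sum.inl e)
  src_comm e := rfl
  tgt_comm e := rfl
  lV_le v := by
    rw [ctxCC_lV_inl]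
    split
    · exact Flat.le_top _
    · exact le_refl _
  lE_le e := le_refl _

end Closures

/-- The interface graph `I(t)` of a term `t`: a discrete graph with
`⊥`-labeled vertices `Var(t) ∪ {ε}`. -/
def interfaceG {S : Type} {ar : S → ℕ} {X : Type} (t : Term S ar X) : LGraph (FlatL S) where
  V := {x : X // x ∈ t.vars} ⊕ Unit
  E := Empty
  src e := e.elim
  tgt e := e.elim
  lV _ := Flat.bot
  lE e := e.elim

/-- The variable vertices of an interface graph. -/
def interfaceVars {S : Type} {ar : S → ℕ} {X : Type} (t : Term S ar X) :
    Set (interfaceG t).V := Set.range Sum.inl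
/-- A PBPO⁺ rewrite rule. -/
structure PBPORule (W : Type) [Preorder W] : Type 1 where
  L : LGraph W
  K : LGraph W
  R : LGraph W
  L' : LGraph W
  K' : LGraph W
  l : K ⟶ L
  r : K ⟶ R
  l' : K' ⟶ L'
  tL : L ⟶ L'
  tK : K ⟶ K'

/-- A PBPO⁺ rewrite step `G_L ⇒_ρ^α G_R`, consisting of a monic match `m`, an
adherence morphism `α` making the match square a pullback, the pullback `G_K`
of `α` along `l'`, and the pushout `G_R` of `r` along `u`. -/
structure RewriteStep {W : Type} [Preorder W] (ρ : PBPORule W) (G₀ G₁ : LGraph W) :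
    Type 1 where
  m : ρ.L ⟶ G₀
  mono_m : Mono m
  α : G₀ ⟶ ρ.L'
  matchPB : IsPullback (𝟙 ρ.L) m ρ.tL α
  GK : LGraph W
  gL : GK ⟶ G₀
  u' : GK ⟶ ρ.K'
  pbK : IsPullback gL u' α ρ.l'
  u : ρ.K ⟶ GK
  u_u' : u ≫ u' = ρ.tK
  u_gL : u ≫ gL = ρ.l ≫ m
  w : ρ.R ⟶ G₁
  gR : GK ⟶ G₁
  po : IsPushout ρ.r u w gR

/-- `G ⇒_ρ H` : there exists a PBPO⁺ rewrite step from `G` to `H` via `ρ`. -/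
def PBPOStep {W : Type} [Preorder W] (ρ : PBPORule W) (G H : LGraph W) : Prop :=
  Nonempty (RewriteStep ρ G H)

/-- A match `m` establishes a match (of the rule `ρ`) if it is monic and some
adherence morphism makes the match square a pullback. -/
def EstablishesMatch {W : Type} [Preorder W] (ρ : PBPORule W) {G : LGraph W}
    (m : ρ.L ⟶ G) : Prop :=
  Mono m ∧ ∃ α : G ⟶ ρ.L', m ≫ α = ρ.tL ∧ IsPullback (𝟙 ρ.L) m ρ.tL α

section RuleEnc

variable {S : Type} {ar : S → ℕ} {X : Type}

/-- The morphism `l : K → L` of the rule encoding. -/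
noncomputable def encKtoL (ρ : TRSRule S ar X) : GLHom (interfaceG ρ.rhs) ρ.lhs.enc where
  onV v := match v with
    | .inl x => Sum.inr ⟨x.1, ρ.var_cond x.2⟩
    | .inr _ => ρ.lhs.encRoot
  onE e := e.elim
  src_comm e := e.elim
  tgt_comm e := e.elim
  lV_le v := by cases v <;> exact Flat.bot_le _
  lE_le e := e.elim

/-- The morphism `r : K → R` of the rule encoding. -/
noncomputable def encKtoR (ρ : TRSRule S ar X) : GLHom (interfaceG ρ.rhs) ρ.rhs.enc where
  onV v := match v with
    | .inl x => Sum.inr x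
    | .inr _ => ρ.rhs.encRoot
  onE e := e.elim
  src_comm e := e.elim
  tgt_comm e := e.elim
  lV_le v := by cases v <;> exact Flat.bot_le _
  lE_le e := e.elim

/-- Mapping the primed (lower-closure) vertices of `K'` to those of `L'`. -/
noncomputable def mapPrime (ρ : TRSRule S ar X) :
    ↥(interfaceVars ρ.rhs) → ↥(ρ.lhs.varHeads) :=
  fun x' => match x' with
  | ⟨.inl x, _⟩ => ⟨Sum.inr ⟨x.1, ρ.var_cond x.2⟩, ⟨⟨x.1, ρ.var_cond x.2⟩, rfl⟩⟩
  | ⟨.inr u, h⟩ => absurd h (by rintro ⟨y, hy⟩; cases hy)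

/-- The morphism `l' : K' → L'` of the rule encoding. -/
noncomputable def encl' (ρ : TRSRule S ar X) :
    GLHom (ctxCC (interfaceG ρ.rhs) (Sum.inr ()) (interfaceVars ρ.rhs))
      (ctxCC ρ.lhs.enc ρ.lhs.encRoot ρ.lhs.varHeads) where
  onV v := match v with
    | .inl (.inl (.inl x)) => .inl (.inl (Sum.inr ⟨x.1, ρ.var_cond x.2⟩))
    | .inl (.inl (.inr _)) => .inl (.inl ρ.lhs.encRoot)
    | .inl (.inr x') => .inl (.inr (mapPrime ρ x'))
    | .inr u => .inr u
  onE e := match e with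
    | .inl (.inl e) => e.elim
    | .inl (.inr (.inl x')) => .inl (.inr (.inl (mapPrime ρ x')))
    | .inl (.inr (.inr x')) => .inl (.inr (.inr (mapPrime ρ x')))
    | .inr b => .inr b
  src_comm := by
    rintro ((e | (⟨(x | u), hv⟩ | ⟨(x | u), hv⟩)) | b)
    · exact e.elim
    · rfl
    · exact absurd hv (by rintro ⟨y, hy⟩; cases hy)
    · rfl
    · exact absurd hv (by rintro ⟨y, hy⟩; cases hy)
    · rfl
  tgt_comm := by
    rintro ((e | (x' | x')) | b)
    · exact e.elim
    · rfl
    · rfl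
    · cases b <;> rfl
  lV_le := by
    rintro (((x | u) | x') | c)
    · refine Flat.le_cases (Or.inr ?_)
      refine (ctxCC_lV_inl ρ.lhs.enc ρ.lhs.encRoot ρ.lhs.varHeads
        (Sum.inr ⟨x.1, ρ.var_cond x.2⟩)).trans ?_
      rw [if_pos ⟨⟨x.1, ρ.var_cond x.2⟩, rfl⟩]
    · refine Flat.le_cases (Or.inl ?_)
      refine (ctxCC_lV_inl (interfaceG ρ.rhs) (Sum.inr ()) (interfaceVars ρ.rhs)
        (Sum.inr u)).trans ?_
      rw [if_neg (by rintro ⟨y, hy⟩; cases hy)]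
      rfl
    · exact Flat.le_cases (Or.inr rfl)
    · exact Flat.le_cases (Or.inr rfl)
  lE_le := by
    rintro ((e | (x' | x')) | b)
    · exact e.elim
    · exact Flat.le_cases (Or.inr rfl)
    · exact Flat.le_cases (Or.inr rfl)
    · exact Flat.le_cases (Or.inr rfl)

/-- The rule encoding `ρ°` of a term rewrite rule `ρ : l → r` as a PBPO⁺ rule. -/
noncomputable def ruleEnc (ρ : TRSRule S ar X) : PBPORule (FlatL S) where
  L := ρ.lhs.enc
  K := interfaceG ρ.rhs
  R := ρ.rhs.enc
  L' := ctxCC ρ.lhs.enc ρ.lhs.encRoot ρ.lhs.varHeads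
  K' := ctxCC (interfaceG ρ.rhs) (Sum.inr ()) (interfaceVars ρ.rhs)
  l := encKtoL ρ
  r := encKtoR ρ
  l' := encl' ρ
  tL := tCC ρ.lhs.enc ρ.lhs.encRoot ρ.lhs.varHeads
  tK := tCC (interfaceG ρ.rhs) (Sum.inr ()) (interfaceVars ρ.rhs)

/-- The rewrite relation of an encoded term rewriting system `R°`. -/
def SysStep (Rs : Set (TRSRule S ar X)) (G H : LGraph (FlatL S)) : Prop :=
  ∃ ρ ∈ Rs, PBPOStep (ruleEnc ρ) G H

end RuleEnc
section Cycles

variable {W : Type}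

/-- `IsUPath G u es v`: `es` is an undirected path from `u` to `v` in `G`. -/
def IsUPath (G : LGraph W) : G.V → List G.E → G.V → Prop
  | u, [], v => u = v
  | u, e :: es, v =>
      (G.src e = u ∧ IsUPath G (G.tgt e) es v) ∨ (G.tgt e = u ∧ IsUPath G (G.src e) es v)

/-- An undirected cycle at `v`: a nonempty undirected path from `v` to `v`
with pairwise distinct edges. -/
def IsUCycle (G : LGraph W) (v : G.V) (es : List G.E) : Prop :=
  es ≠ [] ∧ es.Nodup ∧ IsUPath G v es v

/-- A cycle edge is an edge lying on some undirected cycle. -/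
def CycleEdge (G : LGraph W) (e : G.E) : Prop :=
  ∃ v es, IsUCycle G v es ∧ e ∈ es

/-- A graph is cycle-free if it contains no undirected cycle. -/
def CycleFree (G : LGraph W) : Prop := ¬ ∃ v es, IsUCycle G v es

/-- `[G]`: the graph obtained from `G` by deleting all cycle edges. -/
def dropCycles (G : LGraph W) : LGraph W where
  V := G.V
  E := {e : G.E // ¬ CycleEdge G e}
  src e := G.src e.1
  tgt e := G.tgt e.1
  lV := G.lV
  lE e := G.lE e.1

end Cycles

section Zones

variable {S : Type}

/-- A vertex is in-well-formed if it has at most one incoming edge. -/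
def InWF (G : LGraph (FlatL S)) (v : G.V) : Prop :=
  ∀ e e' : G.E, G.tgt e = v → G.tgt e' = v → e = e'

/-- A vertex is out-well-formed if its label is a function symbol `f` and it
has exactly `ar f` outgoing edges, labeled `1, …, ar f`. -/
def OutWF (G : LGraph (FlatL S)) (ar : S → ℕ) (v : G.V) : Prop :=
  ∃ f : S, G.lV v = Flat.el (Sum.inl f) ∧
    ∃ φ : Fin (ar f) ≃ {e : G.E // G.src e = v},
      ∀ i, G.lE (φ i).1 = Flat.el (Sum.inr ⟨(i : ℕ) + 1, Nat.succ_pos _⟩)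

/-- A vertex is good if it is out-well-formed and all its children are
in-well-formed; otherwise it is bad. -/
def Good (G : LGraph (FlatL S)) (ar : S → ℕ) (v : G.V) : Prop :=
  OutWF G ar v ∧ ∀ e : G.E, G.src e = v → InWF G (G.tgt e)

/-- The edges included in a zone by the zoning algorithm are exactly the edges
with a good source. -/
def ZoneEdge (G : LGraph (FlatL S)) (ar : S → ℕ) (e : G.E) : Prop :=
  Good G ar (G.src e)

/-- One directed step along an edge included in a zone. -/
def ZStep (G : LGraph (FlatL S)) (ar : S → ℕ) (u v : G.V) : Prop :=
  ∃ e, ZoneEdge G ar e ∧ G.src e = u ∧ G.tgt e = v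

/-- Two vertices lie in the same zone iff they are connected by edges included
in zones (equivalence closure of `ZStep`). -/
def SameZone (G : LGraph (FlatL S)) (ar : S → ℕ) : G.V → G.V → Prop :=
  Relation.EqvGen (ZStep G ar)

/-- A root of a zone: a vertex with no parent inside its zone. -/
def IsZoneRoot (G : LGraph (FlatL S)) (ar : S → ℕ) (r : G.V) : Prop :=
  ¬ ∃ e, ZoneEdge G ar e ∧ G.tgt e = r

/-- A directed path along zone edges. -/
def IsZPath (G : LGraph (FlatL S)) (ar : S → ℕ) : G.V → List G.E → G.V → Prop
  | u, [], v => u = v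
  | u, e :: es, v => ZoneEdge G ar e ∧ G.src e = u ∧ IsZPath G ar (G.tgt e) es v

/-- The zone of `v₀`, as a subgraph of `G`, with every bad vertex relabeled
with `⊥`. -/
noncomputable def zoneTermGraph (G : LGraph (FlatL S)) (ar : S → ℕ) (v₀ : G.V) :
    LGraph (FlatL S) where
  V := {u : G.V // SameZone G ar u v₀}
  E := {e : G.E // ZoneEdge G ar e ∧ SameZone G ar (G.src e) v₀}
  src e := ⟨G.src e.1, e.2.2⟩
  tgt e := ⟨G.tgt e.1,
    Relation.EqvGen.trans _ _ _
      (Relation.EqvGen.symm _ _ (Relation.EqvGen.rel _ _ ⟨e.1, e.2.1, rfl, rfl⟩)) e.2.2⟩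
  lV u := if Good G ar u.1 then G.lV u.1 else Flat.bot
  lE e := G.lE e.1

end Zones

section Relabel

variable {W : Type}

/-- `G` with the label of vertex `v` changed to `l`. -/
noncomputable def relabelV (G : LGraph W) (v : G.V) (l : W) : LGraph W :=
  { G with lV := Function.update G.lV v l }

/-- `G` with the label of every vertex in `s` changed to `l`. -/
noncomputable def relabelSet (G : LGraph W) (s : Set G.V) (l : W) : LGraph W :=
  { G with lV := fun u => if u ∈ s then l else G.lV u }

end Relabel

/-!
Every zone edge has a good source, and the children of a good vertex are in-well-formed, so
each vertex of a zone has at most one incoming zone edge. Since the zone is finite and has no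
directed cycle, following parents from any vertex ends in a root, and connectedness makes this
root unique: the zone is a tree. Reading it downwards from the root, a good vertex contributes
its symbol applied to the terms of its children (ordered by edge labels) and a bad vertex a
variable. Pairwise distinct variables make the term linear. The argument indices on the path
from the root to a vertex form its position in that term, which gives the isomorphism with the
term encoding.
-/

theorem wellFounded_of_not_transGen_self {α : Type*} [Finite α] {r : α → α → Prop}
    (h : ∀ a, ¬ Relation.TransGen r a a) : WellFounded r :=
  have : Std.Irrefl (Relation.TransGen r) := ⟨h⟩
  Subrelation.wf (fun h => Relation.TransGen.single h)
    (Finite.wellFounded_of_trans_of_irrefl (Relation.TransGen r))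

namespace LGraph

variable {W : Type} [Preorder W] {G H : LGraph W}

def isoOfBijective (f : GLHom G H) (hV : Function.Bijective f.onV)
    (hE : Function.Bijective f.onE) (hlV : ∀ v, H.lV (f.onV v) ≤ G.lV v)
    (hlE : ∀ e, H.lE (f.onE e) ≤ G.lE e) : G ≅ H where
  hom := f
  inv :=
    { onV := (Equiv.ofBijective _ hV).symm
      onE := (Equiv.ofBijective _ hE).symm
      src_comm := fun e => hV.1 <| by
        rw [Equiv.ofBijective_apply_symm_apply f.onV, ← f.src_comm,
          Equiv.ofBijective_apply_symm_apply f.onE]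
      tgt_comm := fun e => hV.1 <| by
        rw [Equiv.ofBijective_apply_symm_apply f.onV, ← f.tgt_comm,
          Equiv.ofBijective_apply_symm_apply f.onE]
      lV_le := fun v => by
        simpa only [Equiv.ofBijective_apply_symm_apply] using
          hlV ((Equiv.ofBijective _ hV).symm v)
      lE_le := fun e => by
        simpa only [Equiv.ofBijective_apply_symm_apply] using
          hlE ((Equiv.ofBijective _ hE).symm e) }
  hom_inv_id := GLHom.ext' (funext (Equiv.ofBijective _ hV).symm_apply_apply)
    (funext (Equiv.ofBijective _ hE).symm_apply_apply)
  inv_hom_id := GLHom.ext' (funext (Equiv.ofBijective _ hV).apply_symm_apply)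
    (funext (Equiv.ofBijective _ hE).apply_symm_apply)

end LGraph

namespace Term

variable {S : Type} {ar : S → ℕ} {X : Type} {t : Term S ar X}

theorem sub?_eq_app_of_symAt_isSome {p : List ℕ} (h : (t.symAt p).isSome) :
    ∃ f ts, t.sub? p = some (.app f ts) := by
  obtain ⟨f, hf⟩ := Option.isSome_iff_exists.mp h
  exact ⟨f, t.symAt_sub hf⟩

theorem symAt_eq_none_of_sub?_eq_var {p : List ℕ} {x : X} (h : t.sub? p = some (.var x)) :
    t.symAt p = none := by
  simp [symAt, h, head?]

theorem encVertAt_encTgt (e : t.encE) : t.encVertAt (e.1.1 ++ [e.1.2]) (t.encTgt e) := by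
  unfold encTgt
  by_cases h : (t.symAt (e.1.1 ++ [e.1.2])).isSome
  · erw [dif_pos h]
    rfl
  · erw [dif_neg h]
    exact Classical.choose_spec (t.edge_tgt_var e.2 h)

theorem encVertAt_encRoot : t.encVertAt [] t.encRoot := by
  unfold encRoot
  by_cases h : (t.symAt []).isSome
  · erw [dif_pos h]
    rfl
  · erw [dif_neg h]
    exact Classical.choose_spec (t.root_var h)

theorem isSome_sub?_of_encVertAt {p : List ℕ} {v : t.encV} (h : t.encVertAt p v) :
    (t.sub? p).isSome := by
  rcases v with q | x
  · obtain ⟨f, ts, hs⟩ := sub?_eq_app_of_symAt_isSome (h ▸ q.2)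
    simp [hs]
  · simp [show t.sub? p = _ from h]

theorem encVertAt_unique {p : List ℕ} {v w : t.encV} (hv : t.encVertAt p v)
    (hw : t.encVertAt p w) : v = w := by
  rcases v with q | x <;> rcases w with q' | x'
  · exact congrArg Sum.inl (Subtype.ext (hv.trans hw.symm))
  · obtain ⟨f, ts, hs⟩ := sub?_eq_app_of_symAt_isSome (hv ▸ q.2)
    cases hs.symm.trans hw
  · obtain ⟨f, ts, hs⟩ := sub?_eq_app_of_symAt_isSome (hw ▸ q'.2)
    cases hs.symm.trans hv
  · have hxx : Term.var x.1 = .var x'.1 := Option.some.inj (hv.symm.trans hw)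
    injection hxx with hxx
    exact congrArg Sum.inr (Subtype.ext hxx)

theorem Linear.encVertAt_pos_unique (ht : t.Linear) {p q : List ℕ} {v : t.encV}
    (hp : t.encVertAt p v) (hq : t.encVertAt q v) : p = q := by
  rcases v with r | x
  · exact hp.symm.trans hq
  · exact ht x.1 p q hp hq

theorem exists_encVertAt (v : t.encV) : ∃ p, t.encVertAt p v := by
  rcases v with q | ⟨x, p, hp⟩
  · exact ⟨q.1, rfl⟩
  · exact ⟨p, hp⟩

end Term

section ArgumentLabels

variable {S : Type}

-- Edge labels count arguments from `1`, positions in terms from `0`.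
def argLabel (i : ℕ) : FlatL S := Flat.el (Sum.inr ⟨i + 1, Nat.succ_pos i⟩)

def argIndex : FlatL S → ℕ
  | .el (.inr k) => (k : ℕ) - 1
  | _ => 0

@[simp]
theorem argIndex_argLabel (i : ℕ) : argIndex (argLabel (S := S) i) = i := rfl

end ArgumentLabels

namespace Good

variable {S : Type} {ar : S → ℕ} {G : LGraph (FlatL S)} {v : G.V}

def sym (h : Good G ar v) : S := h.1.choose

theorem lV_eq (h : Good G ar v) : G.lV v = Flat.el (Sum.inl h.sym) := h.1.choose_spec.1

def out (h : Good G ar v) : Fin (ar h.sym) ≃ {e : G.E // G.src e = v} :=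
  h.1.choose_spec.2.choose

theorem lE_out (h : Good G ar v) (i : Fin (ar h.sym)) : G.lE (h.out i).1 = argLabel i :=
  h.1.choose_spec.2.choose_spec i

theorem argIndex_out (h : Good G ar v) (i : Fin (ar h.sym)) :
    argIndex (G.lE (h.out i).1) = i := by
  rw [h.lE_out, argIndex_argLabel]

theorem out_out_symm {e : G.E} (h : Good G ar v) (he : G.src e = v) :
    (h.out (h.out.symm ⟨e, he⟩)).1 = e := by
  rw [Equiv.apply_symm_apply]

theorem out_symm_val {e : G.E} (h : Good G ar v) (he : G.src e = v) :
    (h.out.symm ⟨e, he⟩ : ℕ) = argIndex (G.lE e) := by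
  conv_rhs => rw [← h.out_out_symm he]
  rw [h.argIndex_out]

theorem argIndex_lt {e : G.E} (h : Good G ar v) (he : G.src e = v) :
    argIndex (G.lE e) < ar h.sym :=
  h.out_symm_val he ▸ (h.out.symm ⟨e, he⟩).isLt

theorem lE_eq_argLabel {e : G.E} (h : Good G ar v) (he : G.src e = v) :
    G.lE e = argLabel (argIndex (G.lE e)) := by
  conv_lhs => rw [← h.out_out_symm he]
  rw [h.lE_out, h.out_symm_val]

theorem out_argIndex {e : G.E} (h : Good G ar v) (he : G.src e = v) :
    (h.out ⟨argIndex (G.lE e), h.argIndex_lt he⟩).1 = e := by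
  have hi : (⟨argIndex (G.lE e), h.argIndex_lt he⟩ : Fin (ar h.sym)) = h.out.symm ⟨e, he⟩ :=
    Fin.ext (h.out_symm_val he).symm
  rw [hi, h.out_out_symm he]

theorem eq_of_argIndex_eq {e e' : G.E} (h : Good G ar v) (he : G.src e = v)
    (he' : G.src e' = v) (hl : argIndex (G.lE e) = argIndex (G.lE e')) : e = e' := by
  rw [← h.out_argIndex he, ← h.out_argIndex he']
  simp only [hl]

end Good

theorem ZoneEdge.eq_of_tgt_eq {S : Type} {ar : S → ℕ} {G : LGraph (FlatL S)} {e e' : G.E}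
    (he : ZoneEdge G ar e) (h : G.tgt e = G.tgt e') : e = e' :=
  he.2 e rfl e e' rfl h.symm

abbrev Zone {S : Type} (G : LGraph (FlatL S)) (ar : S → ℕ) (v₀ : G.V) : Type :=
  {u : G.V // SameZone G ar u v₀}

namespace Zone

variable {S : Type} {ar : S → ℕ} {G : LGraph (FlatL S)} {v₀ : G.V}

theorem sameZone_tgt {u : G.V} {e : G.E} (hu : SameZone G ar u v₀) (he : ZoneEdge G ar e)
    (hs : G.src e = u) : SameZone G ar (G.tgt e) v₀ :=
  .trans _ _ _ (.symm _ _ (.rel _ _ ⟨e, he, hs, rfl⟩)) hu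

theorem sameZone_src {e : G.E} (ht : SameZone G ar (G.tgt e) v₀) (he : ZoneEdge G ar e) :
    SameZone G ar (G.src e) v₀ :=
  .trans _ _ _ (.rel _ _ ⟨e, he, rfl, rfl⟩) ht

def Step (a b : Zone G ar v₀) : Prop := ZStep G ar a.1 b.1

theorem wellFounded_step (hfin : FiniteG G)
    (hacyc : ¬ ∃ u, SameZone G ar u v₀ ∧ Relation.TransGen (ZStep G ar) u u) :
    WellFounded (Step (G := G) (ar := ar) (v₀ := v₀)) :=
  have := hfin.1
  wellFounded_of_not_transGen_self fun u hu =>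
    hacyc ⟨u.1, u.2, Relation.TransGen.lift Subtype.val (fun _ _ h => h) _ _ hu⟩

theorem wellFounded_flip_step (hfin : FiniteG G)
    (hacyc : ¬ ∃ u, SameZone G ar u v₀ ∧ Relation.TransGen (ZStep G ar) u u) :
    WellFounded (flip (Step (G := G) (ar := ar) (v₀ := v₀))) :=
  have := hfin.1
  wellFounded_of_not_transGen_self fun u hu =>
    hacyc ⟨u.1, u.2, Relation.TransGen.lift Subtype.val (fun _ _ h => h) _ _
      (Relation.transGen_swap.mp hu)⟩

theorem zoneEdge_out {v : G.V} (h : Good G ar v) (i : Fin (ar h.sym)) :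
    ZoneEdge G ar (h.out i).1 :=
  show Good G ar (G.src _) from (h.out i).2.symm ▸ h

def child (u : Zone G ar v₀) (h : Good G ar u.1) (i : Fin (ar h.sym)) : Zone G ar v₀ :=
  ⟨G.tgt (h.out i).1, sameZone_tgt u.2 (zoneEdge_out h i) (h.out i).2⟩

theorem step_child (u : Zone G ar v₀) (h : Good G ar u.1) (i : Fin (ar h.sym)) :
    Step u (child u h i) :=
  ⟨(h.out i).1, zoneEdge_out h i, (h.out i).2, rfl⟩

def child? (u : Zone G ar v₀) (i : ℕ) : Option (Zone G ar v₀) :=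
  if h : Good G ar u.1 then
    if hi : i < ar h.sym then some (child u h ⟨i, hi⟩) else none
  else none

theorem child?_src {e : G.E} (he : ZoneEdge G ar e) (hs : SameZone G ar (G.src e) v₀) :
    child? ⟨G.src e, hs⟩ (argIndex (G.lE e)) = some ⟨G.tgt e, sameZone_tgt hs he rfl⟩ := by
  rw [child?, dif_pos (show Good G ar (G.src e) from he), dif_pos (Good.argIndex_lt he rfl)]
  exact congrArg some (Subtype.ext (congrArg G.tgt (Good.out_argIndex he rfl)))

def descend : Zone G ar v₀ → List ℕ → Option (Zone G ar v₀)
  | u, [] => some u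
  | u, i :: p => (child? u i).bind (descend · p)

theorem descend_append (u : Zone G ar v₀) (p q : List ℕ) :
    descend u (p ++ q) = (descend u p).bind (descend · q) := by
  induction p generalizing u with
  | nil => rfl
  | cons i p ih => simp only [List.cons_append, descend, ih, Option.bind_assoc]

section Term

variable {X : Type} (name : Zone G ar v₀ → X) (hc : WellFounded (flip (Step (v₀ := v₀))))

def term : Zone G ar v₀ → Term S ar X :=
  hc.fix fun u IH =>
    if h : Good G ar u.1 then .app h.sym fun i => IH _ (step_child u h i) else .var (name u)

theorem term_of_good {u : Zone G ar v₀} (h : Good G ar u.1) :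
    term name hc u = .app h.sym fun i => term name hc (child u h i) := by
  rw [term, WellFounded.fix_eq, dif_pos h]

theorem term_of_not_good {u : Zone G ar v₀} (h : ¬ Good G ar u.1) :
    term name hc u = .var (name u) := by
  rw [term, WellFounded.fix_eq, dif_neg h]

theorem sub?_term_cons (u : Zone G ar v₀) (i : ℕ) (p : List ℕ) :
    (term name hc u).sub? (i :: p) = (child? u i).bind fun w => (term name hc w).sub? p := by
  by_cases h : Good G ar u.1
  · rw [term_of_good name hc h, child?, dif_pos h, Term.sub?]
    split_ifs <;> rfl
  · rw [term_of_not_good name hc h, child?, dif_neg h]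
    rfl

theorem sub?_term (u : Zone G ar v₀) (p : List ℕ) :
    (term name hc u).sub? p = (descend u p).map (term name hc) := by
  induction p generalizing u with
  | nil => simp only [Term.sub?, descend, Option.map_some]
  | cons i p ih => simp only [sub?_term_cons, ih, descend, Option.map_bind, Function.comp_def]

end Term

def HasParent (u : Zone G ar v₀) : Prop := ∃ e, ZoneEdge G ar e ∧ G.tgt e = u.1

def parentEdge {u : Zone G ar v₀} (h : HasParent u) : G.E := h.choose

theorem zoneEdge_parentEdge {u : Zone G ar v₀} (h : HasParent u) :
    ZoneEdge G ar (parentEdge h) :=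
  h.choose_spec.1

theorem tgt_parentEdge {u : Zone G ar v₀} (h : HasParent u) : G.tgt (parentEdge h) = u.1 :=
  h.choose_spec.2

theorem parentEdge_eq {u : Zone G ar v₀} (h : HasParent u) {e : G.E}
    (ht : G.tgt e = u.1) : parentEdge h = e :=
  (zoneEdge_parentEdge h).eq_of_tgt_eq ((tgt_parentEdge h).trans ht.symm)

def parent {u : Zone G ar v₀} (h : HasParent u) : Zone G ar v₀ :=
  ⟨G.src (parentEdge h), sameZone_src ((tgt_parentEdge h).symm ▸ u.2) (zoneEdge_parentEdge h)⟩

theorem step_parent {u : Zone G ar v₀} (h : HasParent u) : Step (parent h) u :=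
  ⟨parentEdge h, zoneEdge_parentEdge h, rfl, tgt_parentEdge h⟩

theorem parent_of_zoneEdge {e : G.E} (he : ZoneEdge G ar e) (hs : SameZone G ar (G.src e) v₀)
    (h : HasParent (⟨G.tgt e, sameZone_tgt hs he rfl⟩ : Zone G ar v₀)) :
    parent h = ⟨G.src e, hs⟩ :=
  Subtype.ext (congrArg G.src (parentEdge_eq h rfl))

section Position

variable (hp : WellFounded (Step (G := G) (ar := ar) (v₀ := v₀)))

def posOf : Zone G ar v₀ → List ℕ :=
  hp.fix fun u IH =>
    if h : HasParent u then IH _ (step_parent h) ++ [argIndex (G.lE (parentEdge h))] else []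

def rootOf : Zone G ar v₀ → Zone G ar v₀ :=
  hp.fix fun u IH => if h : HasParent u then IH _ (step_parent h) else u

variable {hp}

theorem posOf_of_hasParent {u : Zone G ar v₀} (h : HasParent u) :
    posOf hp u = posOf hp (parent h) ++ [argIndex (G.lE (parentEdge h))] := by
  rw [posOf, WellFounded.fix_eq, dif_pos h]

theorem posOf_of_not_hasParent {u : Zone G ar v₀} (h : ¬ HasParent u) : posOf hp u = [] := by
  rw [posOf, WellFounded.fix_eq, dif_neg h]

theorem rootOf_of_hasParent {u : Zone G ar v₀} (h : HasParent u) :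
    rootOf hp u = rootOf hp (parent h) := by
  rw [rootOf, WellFounded.fix_eq, dif_pos h]

theorem rootOf_of_not_hasParent {u : Zone G ar v₀} (h : ¬ HasParent u) : rootOf hp u = u := by
  rw [rootOf, WellFounded.fix_eq, dif_neg h]

theorem posOf_tgt {e : G.E} (he : ZoneEdge G ar e) (hs : SameZone G ar (G.src e) v₀) :
    posOf hp ⟨G.tgt e, sameZone_tgt hs he rfl⟩ =
      posOf hp ⟨G.src e, hs⟩ ++ [argIndex (G.lE e)] := by
  have h : HasParent (⟨G.tgt e, sameZone_tgt hs he rfl⟩ : Zone G ar v₀) := ⟨e, he, rfl⟩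
  rw [posOf_of_hasParent h, parent_of_zoneEdge he hs h, parentEdge_eq h rfl]

theorem rootOf_tgt {e : G.E} (he : ZoneEdge G ar e) (hs : SameZone G ar (G.src e) v₀) :
    rootOf hp ⟨G.tgt e, sameZone_tgt hs he rfl⟩ = rootOf hp ⟨G.src e, hs⟩ := by
  have h : HasParent (⟨G.tgt e, sameZone_tgt hs he rfl⟩ : Zone G ar v₀) := ⟨e, he, rfl⟩
  rw [rootOf_of_hasParent h, parent_of_zoneEdge he hs h]

theorem rootOf_eq_of_eqvGen {a b : G.V} (hab : Relation.EqvGen (ZStep G ar) a b)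
    (ha : SameZone G ar a v₀) (hb : SameZone G ar b v₀) :
    rootOf hp ⟨a, ha⟩ = rootOf hp ⟨b, hb⟩ := by
  induction hab with
  | rel a b hab =>
    obtain ⟨e, he, rfl, rfl⟩ := hab
    exact (rootOf_tgt he ha).symm
  | refl => rfl
  | symm a b _ ih => exact (ih hb ha).symm
  | trans a b c _ hbc ih₁ ih₂ =>
    have hb : SameZone G ar b v₀ := .trans _ _ _ hbc hb
    exact (ih₁ ha hb).trans (ih₂ hb _)

variable (hp) in
def root : Zone G ar v₀ := rootOf hp ⟨v₀, .refl v₀⟩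

theorem rootOf_eq_root (u : Zone G ar v₀) : rootOf hp u = root hp :=
  rootOf_eq_of_eqvGen u.2 u.2 (.refl v₀)

theorem eq_root_of_not_hasParent {u : Zone G ar v₀} (h : ¬ HasParent u) : u = root hp :=
  (rootOf_of_not_hasParent h).symm.trans (rootOf_eq_root u)

theorem not_hasParent_root : ¬ HasParent (root hp) := by
  refine hp.induction (C := fun u => ¬ HasParent (rootOf hp u)) _ fun u IH => ?_
  by_cases h : HasParent u
  · rw [rootOf_of_hasParent h]
    exact IH _ (step_parent h)
  · rwa [rootOf_of_not_hasParent h]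

theorem posOf_root : posOf hp (root hp) = [] :=
  posOf_of_not_hasParent not_hasParent_root

end Position

section Descend

variable {hp : WellFounded (Step (G := G) (ar := ar) (v₀ := v₀))}

theorem descend_rootOf_posOf (u : Zone G ar v₀) :
    descend (rootOf hp u) (posOf hp u) = some u := by
  refine hp.induction (C := fun u => descend (rootOf hp u) (posOf hp u) = some u) u fun u IH => ?_
  by_cases h : HasParent u
  · rw [rootOf_of_hasParent h, posOf_of_hasParent h, descend_append, IH _ (step_parent h)]
    simp only [Option.bind_some, descend, parent, child?_src (zoneEdge_parentEdge h)]
    exact congrArg some (Subtype.ext (tgt_parentEdge h))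
  · rw [rootOf_of_not_hasParent h, posOf_of_not_hasParent h]
    rfl

theorem descend_root_posOf (u : Zone G ar v₀) : descend (root hp) (posOf hp u) = some u :=
  rootOf_eq_root (hp := hp) u ▸ descend_rootOf_posOf u

theorem posOf_injective : Function.Injective (posOf hp) := fun u w h =>
  Option.some.inj ((descend_root_posOf u).symm.trans (h ▸ descend_root_posOf w))

theorem posOf_of_child? {u w : Zone G ar v₀} {i : ℕ} (h : child? u i = some w) :
    posOf hp w = posOf hp u ++ [i] := by
  unfold child? at h
  split_ifs at h with hg hi
  cases h
  have hsrc : G.src (hg.out ⟨i, hi⟩).1 = u.1 := (hg.out ⟨i, hi⟩).2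
  have hs : (⟨G.src (hg.out ⟨i, hi⟩).1, hsrc.symm ▸ u.2⟩ : Zone G ar v₀) = u :=
    Subtype.ext hsrc
  rw [child, posOf_tgt (zoneEdge_out hg _) (hsrc.symm ▸ u.2), hs, hg.argIndex_out]

theorem posOf_of_descend {p : List ℕ} {u w : Zone G ar v₀} (h : descend u p = some w) :
    posOf hp w = posOf hp u ++ p := by
  induction p generalizing u with
  | nil =>
    cases h
    exact (List.append_nil _).symm
  | cons i p ih =>
    obtain ⟨c, hc, hcw⟩ := Option.bind_eq_some_iff.mp h
    rw [ih hcw, posOf_of_child? hc, List.append_assoc, List.singleton_append]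

end Descend

section RootTerm

variable {X : Type} {name : Zone G ar v₀ → X} {hc : WellFounded (flip (Step (v₀ := v₀)))}
  {hp : WellFounded (Step (G := G) (ar := ar) (v₀ := v₀))}

theorem sub?_term_root_posOf (u : Zone G ar v₀) :
    (term name hc (root hp)).sub? (posOf hp u) = some (term name hc u) := by
  rw [sub?_term, descend_root_posOf]
  rfl

theorem exists_posOf_eq_of_sub? {p : List ℕ} {s : Term S ar X}
    (h : (term name hc (root hp)).sub? p = some s) :
    ∃ u, posOf hp u = p ∧ term name hc u = s := by
  rw [sub?_term] at h
  obtain ⟨u, hu, rfl⟩ := Option.map_eq_some_iff.mp h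
  exact ⟨u, by rw [posOf_of_descend hu, posOf_root, List.nil_append], rfl⟩

theorem symAt_term_root_posOf {u : Zone G ar v₀} (h : Good G ar u.1) :
    (term name hc (root hp)).symAt (posOf hp u) = some h.sym := by
  rw [Term.symAt, sub?_term_root_posOf, term_of_good name hc h]
  rfl

theorem sub?_term_root_posOf_of_not_good {u : Zone G ar v₀} (h : ¬ Good G ar u.1) :
    (term name hc (root hp)).sub? (posOf hp u) = some (.var (name u)) := by
  rw [sub?_term_root_posOf, term_of_not_good name hc h]

theorem name_eq_of_term_eq_var {u : Zone G ar v₀} {x : X} (h : term name hc u = .var x) :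
    name u = x := by
  by_cases hg : Good G ar u.1
  · rw [term_of_good name hc hg] at h
    cases h
  · rw [term_of_not_good name hc hg] at h
    injection h

theorem linear_term_root (hname : Function.Injective name) :
    (term name hc (root hp)).Linear := by
  intro x p q hpx hqx
  obtain ⟨u, rfl, hu⟩ := exists_posOf_eq_of_sub? hpx
  obtain ⟨w, rfl, hw⟩ := exists_posOf_eq_of_sub? hqx
  rw [hname ((name_eq_of_term_eq_var hu).trans (name_eq_of_term_eq_var hw).symm)]

end RootTerm

section Encoding

variable {X : Type} (name : Zone G ar v₀ → X) (hc : WellFounded (flip (Step (v₀ := v₀))))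
  (hp : WellFounded (Step (G := G) (ar := ar) (v₀ := v₀)))

def encVertex (u : Zone G ar v₀) : (term name hc (root hp)).encV :=
  if h : Good G ar u.1 then .inl ⟨posOf hp u, by rw [symAt_term_root_posOf h]; rfl⟩
  else .inr ⟨name u, posOf hp u, sub?_term_root_posOf_of_not_good h⟩

def encEdge (e : (zoneTermGraph G ar v₀).E) : (term name hc (root hp)).encE :=
  ⟨(posOf hp ⟨G.src e.1, e.2.2⟩, argIndex (G.lE e.1)),
    Good.sym e.2.1, symAt_term_root_posOf (u := ⟨G.src e.1, e.2.2⟩) e.2.1,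
    Good.argIndex_lt e.2.1 rfl⟩

variable {name hc hp}

theorem encVertex_of_good {u : Zone G ar v₀} (h : Good G ar u.1) :
    encVertex name hc hp u = .inl ⟨posOf hp u, by rw [symAt_term_root_posOf h]; rfl⟩ :=
  dif_pos h

theorem encVertex_of_not_good {u : Zone G ar v₀} (h : ¬ Good G ar u.1) :
    encVertex name hc hp u = .inr ⟨name u, posOf hp u, sub?_term_root_posOf_of_not_good h⟩ :=
  dif_neg h

theorem encVertAt_encVertex (u : Zone G ar v₀) :
    (term name hc (root hp)).encVertAt (posOf hp u) (encVertex name hc hp u) := by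
  by_cases h : Good G ar u.1
  · rw [encVertex_of_good h]
    rfl
  · rw [encVertex_of_not_good h]
    exact sub?_term_root_posOf_of_not_good h

theorem enc_lV_encVertex (u : Zone G ar v₀) :
    (term name hc (root hp)).enc.lV (encVertex name hc hp u) = (zoneTermGraph G ar v₀).lV u := by
  by_cases h : Good G ar u.1
  · rw [encVertex_of_good h]
    simp only [Term.enc, zoneTermGraph, symAt_term_root_posOf h, if_pos h, h.lV_eq]
    rfl
  · rw [encVertex_of_not_good h]
    simp only [Term.enc, zoneTermGraph, if_neg h]

theorem enc_lE_encEdge (e : (zoneTermGraph G ar v₀).E) :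
    (term name hc (root hp)).enc.lE (encEdge name hc hp e) = (zoneTermGraph G ar v₀).lE e :=
  (Good.lE_eq_argLabel e.2.1 rfl).symm

variable (name hc hp)

def toEnc : GLHom (zoneTermGraph G ar v₀) (term name hc (root hp)).enc where
  onV := encVertex name hc hp
  onE := encEdge name hc hp
  src_comm e := (encVertex_of_good (u := ⟨G.src e.1, e.2.2⟩) e.2.1).symm
  tgt_comm e := Term.encVertAt_unique (Term.encVertAt_encTgt _)
    (posOf_tgt e.2.1 e.2.2 ▸ encVertAt_encVertex _)
  lV_le u := (enc_lV_encVertex u).ge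
  lE_le e := (enc_lE_encEdge e).ge

variable {name hc hp}

theorem encVertex_injective (hname : Function.Injective name) :
    Function.Injective (encVertex name hc hp) := fun u w h =>
  posOf_injective <| (linear_term_root hname).encVertAt_pos_unique (encVertAt_encVertex u)
    (h ▸ encVertAt_encVertex w)

theorem encVertex_surjective : Function.Surjective (encVertex name hc hp) := by
  intro v
  obtain ⟨p, hpv⟩ := Term.exists_encVertAt v
  obtain ⟨s, hs⟩ := Option.isSome_iff_exists.mp (Term.isSome_sub?_of_encVertAt hpv)
  obtain ⟨u, rfl, -⟩ := exists_posOf_eq_of_sub? hs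
  exact ⟨u, Term.encVertAt_unique (encVertAt_encVertex u) hpv⟩

theorem encEdge_injective : Function.Injective (encEdge name hc hp) := by
  intro e e' h
  have hpos : posOf hp ⟨G.src e.1, e.2.2⟩ = posOf hp ⟨G.src e'.1, e'.2.2⟩ :=
    congrArg (fun E => E.1.1) h
  have hsrc : G.src e.1 = G.src e'.1 := congrArg Subtype.val (posOf_injective hpos)
  exact Subtype.ext (Good.eq_of_argIndex_eq e.2.1 rfl hsrc.symm (congrArg (fun E => E.1.2) h))

theorem encEdge_surjective : Function.Surjective (encEdge name hc hp) := by
  rintro ⟨⟨p, i⟩, f, hf, hi⟩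
  obtain ⟨f', ts, hs⟩ :=
    Term.sub?_eq_app_of_symAt_isSome (Option.isSome_iff_exists.mpr ⟨f, hf⟩)
  obtain ⟨u, rfl, -⟩ := exists_posOf_eq_of_sub? hs
  have hg : Good G ar u.1 := by
    by_contra hg
    rw [Term.symAt_eq_none_of_sub?_eq_var (sub?_term_root_posOf_of_not_good hg)] at hf
    cases hf
  have hsym : hg.sym = f := Option.some.inj ((symAt_term_root_posOf hg).symm.trans hf)
  let i' : Fin (ar hg.sym) := ⟨i, hsym ▸ hi⟩
  have hsrc : G.src (hg.out i').1 = u.1 := (hg.out i').2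
  refine ⟨⟨(hg.out i').1, zoneEdge_out hg i', hsrc.symm ▸ u.2⟩, Subtype.ext ?_⟩
  simp only [encEdge, hg.argIndex_out]
  congr 2
  exact Subtype.ext hsrc

theorem encVertex_root : encVertex name hc hp (root hp) = (term name hc (root hp)).encRoot :=
  Term.encVertAt_unique (posOf_root (hp := hp) ▸ encVertAt_encVertex _) Term.encVertAt_encRoot

variable (hc hp)

def encIso (hname : Function.Injective name) :
    zoneTermGraph G ar v₀ ≅ (term name hc (root hp)).enc :=
  LGraph.isoOfBijective (toEnc name hc hp)
    ⟨encVertex_injective hname, encVertex_surjective⟩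
    ⟨encEdge_injective, encEdge_surjective⟩
    (fun u => (enc_lV_encVertex u).le) (fun e => (enc_lE_encEdge e).le)

end Encoding

end Zone

/-- Zones as term encodings. If a zone `Z` (the zone of `v₀`) of
a finite `Σ°`-labeled graph contains no directed cycle among its included
edges, then relabeling every bad vertex of `Z` with `⊥` yields a rooted graph
isomorphic to the term encoding `t°` of some linear term `t` (the isomorphism
maps the root of the zone to the root of `t°`). -/
theorem statement_15 {S : Type} (ar : S → ℕ) (X : Type) [Infinite X]
    (G : LGraph (FlatL S)) (hfin : FiniteG G) (v₀ : G.V)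
    (hacyc : ¬ ∃ u, SameZone G ar u v₀ ∧ Relation.TransGen (ZStep G ar) u u) :
    ∃ t : Term S ar X, t.Linear ∧ ∃ iso : zoneTermGraph G ar v₀ ≅ t.enc,
      ∀ r : (zoneTermGraph G ar v₀).V,
        (¬ ∃ e : (zoneTermGraph G ar v₀).E, (zoneTermGraph G ar v₀).tgt e = r) →
        homV iso.hom r = t.encRoot := by
  have := hfin.1
  let name : Zone G ar v₀ ↪ X :=
    (Finite.equivFin _).toEmbedding.trans (Fin.valEmbedding.trans (Infinite.natEmbedding X))
  have hc := Zone.wellFounded_flip_step hfin hacyc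
  have hp := Zone.wellFounded_step hfin hacyc
  refine ⟨_, Zone.linear_term_root name.injective, Zone.encIso hc hp name.injective,
    fun r hr => ?_⟩
  obtain rfl : r = Zone.root hp :=
    Zone.eq_root_of_not_hasParent fun ⟨e, he, ht⟩ =>
      hr ⟨⟨e, he, Zone.sameZone_src (ht ▸ r.2) he⟩, Subtype.ext ht⟩
  exact Zone.encVertex_root
end
end

section
/- Let ρ = l → r be a linear term rewrite rule and let m : l° ↣ G be a match morphism establishing a PBPO+ rewrite step via the rule encoding ρ° on a finite Σ°-labeled graph G. Then the image m(l°) lies in exactly one zone of G. -/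
open CategoryTheory
open Classical

noncomputable section

/-! The match square is a pullback along an identity, so every edge of `G` that `α` sends into
`l°` is the image of that edge under `m`. In `L' = C[l°↓X]` every edge leaving a symbol vertex,
and every edge entering a vertex other than the root, already lies in `l°`. Hence the image of
a symbol vertex has exactly the labelled out-edges prescribed by `l°`, and each of its children
has a single incoming edge (linearity is needed for the variable heads): images of symbol
vertices are good, so image edges are zone edges, and since `l°` is connected its image lies in
one zone. -/

theorem Flat.le_antisymm {A : Type} {a b : Flat A} (hab : a ≤ b) (hba : b ≤ a) : a = b := by
  change Flat.le a b at hab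
  change Flat.le b a at hba
  cases a <;> cases b <;> simp_all [Flat.le]

namespace Term

variable {S : Type} {ar : S → ℕ} {X : Type} {t : Term S ar X}

theorem sub?_isSome_of_symAt_isSome {p : List ℕ} (h : (t.symAt p).isSome) :
    (t.sub? p).isSome := by
  unfold symAt at h
  cases hs : t.sub? p <;> simp_all

theorem symAt_of_sub?_append_isSome {q : List ℕ} {i : ℕ} (h : (t.sub? (q ++ [i])).isSome) :
    ∃ g, t.symAt q = some g ∧ i < ar g := by
  rw [sub?_append] at h
  cases hs : t.sub? q with
  | none => simp [hs] at h
  | some s =>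
    cases s with
    | var x => simp [hs, sub?] at h
    | app g ts =>
      refine ⟨g, by simp [symAt, hs, head?], ?_⟩
      by_contra hi
      simp [hs, sub?, hi] at h

theorem symAt_nil_isSome (e : t.encE) : (t.symAt []).isSome := by
  obtain ⟨⟨p, i⟩, f, hf, -⟩ := e
  cases t with
  | var x => cases p <;> simp [symAt, sub?, head?] at hf
  | app g ts => simp [symAt, sub?, head?]

theorem encRoot_eq_inl (h : (t.symAt []).isSome) : t.encRoot = Sum.inl ⟨[], h⟩ := by
  exact dif_pos h

theorem encRoot_eq_inr {x : X} (h : t.sub? [] = some (.var x)) (hx : x ∈ t.vars) :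
    t.encRoot = Sum.inr ⟨x, hx⟩ := by
  have hn : ¬ (t.symAt []).isSome := by simp [symAt, h, head?]
  refine (dif_neg hn).trans ?_
  have h' := h.symm.trans (Classical.choose_spec (t.root_var hn))
  simp only [Option.some.injEq, Term.var.injEq] at h'
  exact congrArg Sum.inr (Subtype.ext h'.symm)

theorem encTgt_eq_inl (e : t.encE) (h : (t.symAt (e.1.1 ++ [e.1.2])).isSome) :
    t.encTgt e = Sum.inl ⟨e.1.1 ++ [e.1.2], h⟩ := by
  exact dif_pos h

theorem encTgt_eq_inr (e : t.encE) {x : X} (h : t.sub? (e.1.1 ++ [e.1.2]) = some (.var x))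
    (hx : x ∈ t.vars) : t.encTgt e = Sum.inr ⟨x, hx⟩ := by
  have hn : ¬ (t.symAt (e.1.1 ++ [e.1.2])).isSome := by simp [symAt, h, head?]
  refine (dif_neg hn).trans ?_
  have h' := h.symm.trans (Classical.choose_spec (t.edge_tgt_var e.2 hn))
  simp only [Option.some.injEq, Term.var.injEq] at h'
  exact congrArg Sum.inr (Subtype.ext h'.symm)

theorem encTgt_ne_encRoot (e : t.encE) : t.encTgt e ≠ t.encRoot := by
  rw [encRoot_eq_inl (symAt_nil_isSome e)]
  by_cases h : (t.symAt (e.1.1 ++ [e.1.2])).isSome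
  · rw [encTgt_eq_inl e h]
    intro h'
    simpa using congrArg Subtype.val (Sum.inl.inj h')
  · obtain ⟨x, hx⟩ := t.edge_tgt_var e.2 h
    rw [encTgt_eq_inr e hx ⟨_, hx⟩]
    intro h'
    cases h'

/-- Variable heads have at most one incoming edge only because `t` is linear. -/
theorem encTgt_injective (hlin : t.Linear) : Function.Injective t.encTgt := by
  rintro ⟨⟨q₁, i₁⟩, he₁⟩ ⟨⟨q₂, i₂⟩, he₂⟩ h
  suffices hq : q₁ ++ [i₁] = q₂ ++ [i₂] by
    obtain ⟨rfl, hi⟩ := List.append_inj' hq rfl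
    cases List.singleton_inj.mp hi
    rfl
  by_cases h₁ : (t.symAt (q₁ ++ [i₁])).isSome <;> by_cases h₂ : (t.symAt (q₂ ++ [i₂])).isSome
  · rw [encTgt_eq_inl ⟨_, he₁⟩ h₁, encTgt_eq_inl ⟨_, he₂⟩ h₂] at h
    exact congrArg Subtype.val (Sum.inl.inj h)
  · obtain ⟨x, hx⟩ := t.edge_tgt_var he₂ h₂
    rw [encTgt_eq_inl ⟨_, he₁⟩ h₁, encTgt_eq_inr ⟨_, he₂⟩ hx ⟨_, hx⟩] at h
    cases h
  · obtain ⟨x, hx⟩ := t.edge_tgt_var he₁ h₁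
    rw [encTgt_eq_inr ⟨_, he₁⟩ hx ⟨_, hx⟩, encTgt_eq_inl ⟨_, he₂⟩ h₂] at h
    cases h
  · obtain ⟨x, hx⟩ := t.edge_tgt_var he₁ h₁
    obtain ⟨y, hy⟩ := t.edge_tgt_var he₂ h₂
    rw [encTgt_eq_inr ⟨_, he₁⟩ hx ⟨_, hx⟩, encTgt_eq_inr ⟨_, he₂⟩ hy ⟨_, hy⟩] at h
    obtain rfl : x = y := congrArg Subtype.val (Sum.inr.inj h)
    exact hlin x _ _ hx hy

theorem enc_connected {r : t.encV → t.encV → Prop} (hr : Equivalence r)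
    (hedge : ∀ e, r (t.enc.src e) (t.enc.tgt e)) (v : t.encV) : r v t.encRoot := by
  have hsym : ∀ (p : List ℕ) (hp : (t.symAt p).isSome), r (Sum.inl ⟨p, hp⟩) t.encRoot := by
    intro p
    induction p using List.reverseRecOn with
    | nil => intro hp; rw [encRoot_eq_inl hp]; exact hr.refl _
    | append_singleton q i ih =>
      intro hp
      obtain ⟨g, hg, hi⟩ := symAt_of_sub?_append_isSome (sub?_isSome_of_symAt_isSome hp)
      have he := hedge ⟨(q, i), g, hg, hi⟩
      rw [show t.enc.tgt _ = _ from encTgt_eq_inl ⟨(q, i), g, hg, hi⟩ hp] at he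
      exact hr.trans (hr.symm he) (ih (by simp [hg]))
  rcases v with ⟨p, hp⟩ | ⟨x, hx⟩
  · exact hsym p hp
  · obtain ⟨p, hp⟩ := id hx
    rcases List.eq_nil_or_concat' p with rfl | ⟨q, i, rfl⟩
    · rw [encRoot_eq_inr hp hx]
      exact hr.refl _
    · obtain ⟨g, hg, hi⟩ := symAt_of_sub?_append_isSome (t := t) (q := q) (i := i) (by simp [hp])
      have he := hedge ⟨(q, i), g, hg, hi⟩
      rw [show t.enc.tgt _ = _ from encTgt_eq_inr ⟨(q, i), g, hg, hi⟩ hp hx] at he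
      exact hr.trans (hr.symm he) (hsym q (by simp [hg]))

end Term

section Pullback

variable {A : Type}

/-- Labeled `⊥` throughout, so that it maps onto every edge of every graph: a test object for
pullbacks. -/
def singleEdge (A : Type) : LGraph (Flat A) where
  V := Bool
  E := Unit
  src _ := false
  tgt _ := true
  lV _ := Flat.bot
  lE _ := Flat.bot

def singleEdgeHom (G : LGraph (Flat A)) (e : G.E) : singleEdge A ⟶ G where
  onV b := cond b (G.tgt e) (G.src e)
  onE _ := e
  src_comm _ := rfl
  tgt_comm _ := rfl
  lV_le _ := Flat.bot_le _
  lE_le _ := Flat.bot_le _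

theorem onE_eq_of_isPullback_id {B C D : LGraph (Flat A)} {f : B ⟶ C} {g : B ⟶ D}
    {α : C ⟶ D} (hpb : IsPullback (𝟙 B) f g α) {h : C.E} {e : B.E}
    (he : homE α h = homE g e) : homE f e = h := by
  have hcomm : singleEdgeHom B e ≫ g = singleEdgeHom C h ≫ α := by
    refine GLHom.ext' (funext fun b => ?_) (funext fun _ => he.symm)
    cases b
    · change g.onV (B.src e) = α.onV (C.src h)
      rw [← g.src_comm, ← α.src_comm]
      exact congrArg D.src he.symm
    · change g.onV (B.tgt e) = α.onV (C.tgt h)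
      rw [← g.tgt_comm, ← α.tgt_comm]
      exact congrArg D.tgt he.symm
  have hfst := hpb.lift_fst _ _ hcomm
  have hsnd := hpb.lift_snd _ _ hcomm
  rw [Category.comp_id] at hfst
  rw [hfst] at hsnd
  have h' := congrArg (fun φ => homE φ ()) hsnd
  exact h'

end Pullback

section ContextClosure

variable {A : Type} {G : LGraph (Flat A)} {r : G.V} {Xs : Set G.V}

theorem ctxCC_exists_eq_inl_of_src {e : (ctxCC G r Xs).E} {v : G.V} (hv : v ∉ Xs)
    (h : (ctxCC G r Xs).src e = Sum.inl (Sum.inl v)) :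
    ∃ e', e = Sum.inl (Sum.inl e') ∧ G.src e' = v := by
  rcases e with (e' | x | x) | b
  · exact ⟨e', rfl, by simpa [ctxCC, upperCC, lowerCC] using h⟩
  · obtain rfl : x.1 = v := by simpa [ctxCC, upperCC, lowerCC] using h
    exact absurd x.2 hv
  all_goals simp [ctxCC, upperCC, lowerCC] at h

theorem ctxCC_exists_eq_inl_of_tgt {e : (ctxCC G r Xs).E} {v : G.V} (hv : v ≠ r)
    (h : (ctxCC G r Xs).tgt e = Sum.inl (Sum.inl v)) :
    ∃ e', e = Sum.inl (Sum.inl e') ∧ G.tgt e' = v := by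
  rcases e with (e' | x | x) | b
  · exact ⟨e', rfl, by simpa [ctxCC, upperCC, lowerCC] using h⟩
  · simp [ctxCC, upperCC, lowerCC] at h
  · simp [ctxCC, upperCC, lowerCC] at h
  · cases b
    · simp [ctxCC, upperCC, lowerCC] at h
    · exact absurd (by simpa [ctxCC, upperCC, lowerCC] using h) hv.symm

end ContextClosure

section Match

variable {S : Type} {ar : S → ℕ} {X : Type} {t : Term S ar X} {G : LGraph (FlatL S)}
  {m : t.enc ⟶ G} {α : G ⟶ ctxCC t.enc t.encRoot t.varHeads}

theorem adherence_match_onV (hpb : IsPullback (𝟙 t.enc) m (tCC t.enc t.encRoot t.varHeads) α)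
    (v : t.encV) : homV α (homV m v) = Sum.inl (Sum.inl v) :=
  (congrFun (congrArg GLHom.onV hpb.w) v).symm

theorem adherence_match_onE (hpb : IsPullback (𝟙 t.enc) m (tCC t.enc t.encRoot t.varHeads) α)
    (e : t.encE) : homE α (homE m e) = Sum.inl (Sum.inl e) :=
  (congrFun (congrArg GLHom.onE hpb.w) e).symm

theorem match_onE_injective
    (hpb : IsPullback (𝟙 t.enc) m (tCC t.enc t.encRoot t.varHeads) α) :
    Function.Injective (homE m) := fun e₁ e₂ h => by
  have h' := (adherence_match_onE hpb e₁).symm.trans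
    ((congrArg (homE α) h).trans (adherence_match_onE hpb e₂))
  exact Sum.inl.inj (Sum.inl.inj h')

theorem match_exists_of_src (hpb : IsPullback (𝟙 t.enc) m (tCC t.enc t.encRoot t.varHeads) α)
    {v : t.encV} (hv : v ∉ t.varHeads) {h : G.E} (hs : G.src h = homV m v) :
    ∃ e, t.enc.src e = v ∧ homE m e = h := by
  have hαs : (ctxCC t.enc t.encRoot t.varHeads).src (homE α h) = Sum.inl (Sum.inl v) :=
    (α.src_comm h).trans ((congrArg (homV α) hs).trans (adherence_match_onV hpb v))
  obtain ⟨e, he, rfl⟩ := ctxCC_exists_eq_inl_of_src hv hαs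
  exact ⟨e, rfl, onE_eq_of_isPullback_id hpb he⟩

theorem match_exists_of_tgt (hpb : IsPullback (𝟙 t.enc) m (tCC t.enc t.encRoot t.varHeads) α)
    {v : t.encV} (hv : v ≠ t.encRoot) {h : G.E} (ht : G.tgt h = homV m v) :
    ∃ e, t.enc.tgt e = v ∧ homE m e = h := by
  have hαt : (ctxCC t.enc t.encRoot t.varHeads).tgt (homE α h) = Sum.inl (Sum.inl v) :=
    (α.tgt_comm h).trans ((congrArg (homV α) ht).trans (adherence_match_onV hpb v))
  obtain ⟨e, he, rfl⟩ := ctxCC_exists_eq_inl_of_tgt hv hαt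
  exact ⟨e, rfl, onE_eq_of_isPullback_id hpb he⟩

/-- Away from the variable heads, `L'` carries the labels of `l°`, and these bound the labels
of `G` from both sides along `m` and `α`. -/
theorem match_lV (hpb : IsPullback (𝟙 t.enc) m (tCC t.enc t.encRoot t.varHeads) α)
    {v : t.encV} (hv : v ∉ t.varHeads) : G.lV (homV m v) = t.enc.lV v := by
  have hL' : (ctxCC t.enc t.encRoot t.varHeads).lV (homV α (homV m v)) = t.enc.lV v :=
    (congrArg _ (adherence_match_onV hpb v)).trans ((ctxCC_lV_inl t.enc t.encRoot t.varHeads v).trans (if_neg hv))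
  exact Flat.le_antisymm ((α.lV_le _).trans_eq hL') (m.lV_le v)

theorem match_lE (hpb : IsPullback (𝟙 t.enc) m (tCC t.enc t.encRoot t.varHeads) α)
    (e : t.encE) : G.lE (homE m e) = t.enc.lE e := by
  have hL' : (ctxCC t.enc t.encRoot t.varHeads).lE (homE α (homE m e)) = t.enc.lE e :=
    congrArg _ (adherence_match_onE hpb e)
  exact Flat.le_antisymm ((α.lE_le _).trans_eq hL') (m.lE_le e)

theorem good_match_symbol (hlin : t.Linear)
    (hpb : IsPullback (𝟙 t.enc) m (tCC t.enc t.encRoot t.varHeads) α)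
    {p : List ℕ} (hp : (t.symAt p).isSome) : Good G ar (homV m (Sum.inl ⟨p, hp⟩)) := by
  have hnv : (Sum.inl ⟨p, hp⟩ : t.encV) ∉ t.varHeads := by rintro ⟨_, ⟨⟩⟩
  obtain ⟨f, hf⟩ := Option.isSome_iff_exists.mp hp
  refine ⟨⟨f, ?_, ?_⟩, ?_⟩
  · rw [match_lV hpb hnv]
    simp [Term.enc, hf]
  · let child : Fin (ar f) → {h : G.E // G.src h = homV m (Sum.inl ⟨p, hp⟩)} :=
      fun i => ⟨homE m ⟨(p, i), f, hf, i.2⟩, m.src_comm _⟩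
    have hbij : Function.Bijective child := by
      refine ⟨fun i j hij => ?_, fun ⟨h, hs⟩ => ?_⟩
      · have := match_onE_injective hpb (congrArg Subtype.val hij)
        exact Fin.ext (congrArg (fun e : t.encE => e.1.2) this)
      · obtain ⟨⟨⟨q, j⟩, g, hg, hj⟩, hsrc, rfl⟩ := match_exists_of_src hpb hnv hs
        obtain rfl : q = p := congrArg Subtype.val (Sum.inl.inj hsrc)
        obtain rfl : g = f := Option.some.inj (hg.symm.trans hf)
        exact ⟨⟨j, hj⟩, rfl⟩
    exact ⟨Equiv.ofBijective child hbij, fun i => match_lE hpb _⟩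
  · intro h hs h₁ h₂ ht₁ ht₂
    obtain ⟨e, -, rfl⟩ := match_exists_of_src hpb hnv hs
    rw [m.tgt_comm] at ht₁ ht₂
    obtain ⟨e₁, he₁, rfl⟩ := match_exists_of_tgt hpb (t.encTgt_ne_encRoot e) ht₁
    obtain ⟨e₂, he₂, rfl⟩ := match_exists_of_tgt hpb (t.encTgt_ne_encRoot e) ht₂
    rw [Term.encTgt_injective hlin (he₁.trans he₂.symm)]

theorem zoneEdge_match (hlin : t.Linear)
    (hpb : IsPullback (𝟙 t.enc) m (tCC t.enc t.encRoot t.varHeads) α) (e : t.encE) :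
    ZoneEdge G ar (homE m e) := by
  unfold ZoneEdge
  rw [show G.src (homE m e) = homV m (t.enc.src e) from m.src_comm e]
  exact good_match_symbol hlin hpb _

theorem sameZone_match (hlin : t.Linear)
    (hpb : IsPullback (𝟙 t.enc) m (tCC t.enc t.encRoot t.varHeads) α) (v w : t.encV) :
    SameZone G ar (homV m v) (homV m w) := by
  have hequiv : Equivalence fun a b => SameZone G ar (homV m a) (homV m b) :=
    ⟨fun _ => .refl _, .symm _ _, .trans _ _ _⟩
  have hedge (e : t.encE) : SameZone G ar (homV m (t.enc.src e)) (homV m (t.enc.tgt e)) :=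
    .rel _ _ ⟨homE m e, zoneEdge_match hlin hpb e, m.src_comm e, m.tgt_comm e⟩
  exact hequiv.trans (t.enc_connected hequiv hedge v) (hequiv.symm (t.enc_connected hequiv hedge w))

end Match

theorem statement_17_general {S : Type} {ar : S → ℕ} {X : Type}
    (ρ : TRSRule S ar X) (hρ : ρ.Linear) (G H : LGraph (FlatL S))
    (st : RewriteStep (ruleEnc ρ) G H) :
    (∀ v w : (ruleEnc ρ).L.V, SameZone G ar (homV st.m v) (homV st.m w)) ∧
    (∀ e : (ruleEnc ρ).L.E, ZoneEdge G ar (homE st.m e)) :=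
  ⟨sameZone_match hρ.1 st.matchPB, zoneEdge_match hρ.1 st.matchPB⟩

/-- Matches respect zone boundaries. The image `m(l°)` of a match
morphism `m : l° ↣ G` establishing a PBPO⁺ rewrite step via the rule encoding
`ρ°` of a linear term rewrite rule on a finite `Σ°`-labeled graph `G` lies in
exactly one zone of `G`. -/
theorem statement_17 {S : Type} {ar : S → ℕ} {X : Type}
    (ρ : TRSRule S ar X) (hρ : ρ.Linear) (G H : LGraph (FlatL S))
    (hfin : FiniteG G) (st : RewriteStep (ruleEnc ρ) G H) :
    (∀ v w : (ruleEnc ρ).L.V, SameZone G ar (homV st.m v) (homV st.m w)) ∧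
    (∀ e : (ruleEnc ρ).L.E, ZoneEdge G ar (homE st.m e)) :=
  statement_17_general ρ hρ G H st
end
end

section
/- Let G^{[ℓ(v):=l]} denote the graph obtained from G by changing the label of vertex v to l (with G^{[ℓ(v):=l]} = G if v is not a vertex of G). For every bad vertex v of a finite Σ°-labeled graph G and every label l ∈ Σ°: if G ⇒ H is a PBPO+ rewrite step via a rule encoding ρ° of a linear term rewrite rule ρ with adherence morphism α, then G^{[ℓ(v):=l]} ⇒ H^{[ℓ(v):=l]} is a PBPO+ rewrite step via ρ° with adherence morphism α. -/
open CategoryTheory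
open Classical

noncomputable section

/-!
If `α` sent the bad vertex `v` to a vertex of `L'` not labeled `⊤`, that vertex would be a
symbol vertex of `l°`, and the match square being a pullback would make `v` an exact copy of it:
out-well-formed, with children that (by linearity of `l`) have a single parent each. So `α v` is
labeled `⊤` and the label of `v` is unconstrained.

In `Graph^(L,≤)` the squares of a rewrite step are pullbacks resp. pushouts of the underlying
graphs with meets resp. joins of labels; changing labels while keeping these meets and joins
keeps them pullbacks and pushouts (test the universal property against cones relabeled to
`⊥`, resp. cocones relabeled to `⊤`). The `g_L`-fiber of `v` gets the meet `l ⊓ ⊤ = l`, and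
the only vertices of `R` and `G_K` that the pushout glues to it are variable vertices of `r°`
and the image of the root of `K`, all labeled `⊥`.
-/

instance (A : Type) : OrderBot (Flat A) where
  bot := Flat.bot
  bot_le := Flat.bot_le

instance (A : Type) : OrderTop (Flat A) where
  top := Flat.top
  le_top := Flat.le_top

theorem Flat.eq_of_el_le_of_le_el {A : Type} {a : A} {x : Flat A}
    (h₁ : Flat.el a ≤ x) (h₂ : x ≤ Flat.el a) : x = Flat.el a := by
  cases x <;> simp_all [LE.le, Flat.le]

theorem Flat.eq_bot_of_le_bot {A : Type} {x : Flat A} (h : x ≤ Flat.bot) : x = Flat.bot := by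
  cases x <;> simp_all [LE.le, Flat.le]

section Relabeling

variable {W : Type}

def LGraph.withLV (G : LGraph W) (lV : G.V → W) : LGraph W := { G with lV := lV }

theorem relabelV_lV (G : LGraph W) (v : G.V) (l : W) (x : G.V) :
    (relabelV G v l).lV x = Function.update G.lV v l x := rfl

theorem relabelSet_lV (G : LGraph W) (s : Set G.V) (l : W) (x : G.V) :
    (relabelSet G s l).lV x = if x ∈ s then l else G.lV x := rfl

variable [Preorder W]

theorem homV_congr {G H : LGraph W} {f g : G ⟶ H} (h : f = g) (x : G.V) :
    homV f x = homV g x := by rw [h]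

theorem homE_congr {G H : LGraph W} {f g : G ⟶ H} (h : f = g) (e : G.E) :
    homE f e = homE g e := by rw [h]

theorem src_homE {G H : LGraph W} (f : G ⟶ H) (e : G.E) :
    H.src (homE f e) = homV f (G.src e) := GLHom.src_comm f e

theorem tgt_homE {G H : LGraph W} (f : G ⟶ H) (e : G.E) :
    H.tgt (homE f e) = homV f (G.tgt e) := GLHom.tgt_comm f e

theorem lV_le_homV {G H : LGraph W} (f : G ⟶ H) (x : G.V) : G.lV x ≤ H.lV (homV f x) :=
  GLHom.lV_le f x

theorem lE_le_homE {G H : LGraph W} (f : G ⟶ H) (e : G.E) : G.lE e ≤ H.lE (homE f e) :=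
  GLHom.lE_le f e

theorem LGraph.hom_ext {G H : LGraph W} {f g : G ⟶ H}
    (hV : ∀ x, homV f x = homV g x) (hE : ∀ e, homE f e = homE g e) : f = g :=
  GLHom.ext' (funext hV) (funext hE)

def GLHom.withLV {G H : LGraph W} (f : G ⟶ H) (lG : G.V → W) (lH : H.V → W)
    (h : ∀ x, lG x ≤ lH (homV f x)) : G.withLV lG ⟶ H.withLV lH where
  onV := @homV W _ G H f
  onE := @homE W _ G H f
  src_comm := GLHom.src_comm f
  tgt_comm := GLHom.tgt_comm f
  lV_le := h
  lE_le := GLHom.lE_le f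

end Relabeling

section TestGraphs

variable {W : Type} [Preorder W]

def LGraph.point (W : Type) [Bot W] : LGraph W :=
  ⟨PUnit, Empty, Empty.elim, Empty.elim, fun _ => ⊥, Empty.elim⟩

def LGraph.pointTo [OrderBot W] (G : LGraph W) (x : G.V) : LGraph.point W ⟶ G :=
  ⟨fun _ => x, Empty.elim, (·.elim), (·.elim), fun _ => bot_le, (·.elim)⟩

def LGraph.arrow (W : Type) [Bot W] : LGraph W :=
  ⟨Bool, PUnit, fun _ => false, fun _ => true, fun _ => ⊥, fun _ => ⊥⟩

def LGraph.arrowTo [OrderBot W] (G : LGraph W) (e : G.E) : LGraph.arrow W ⟶ G :=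
  ⟨fun b => cond b (G.tgt e) (G.src e), fun _ => e, fun _ => rfl, fun _ => rfl,
    fun _ => bot_le, fun _ => bot_le⟩

def LGraph.props (W : Type) [Top W] : LGraph W :=
  ⟨Prop, Prop × Prop, Prod.fst, Prod.snd, fun _ => ⊤, fun _ => ⊤⟩

def LGraph.toProps [OrderTop W] (G : LGraph W) (P : G.V → Prop) : G ⟶ LGraph.props W :=
  ⟨P, fun e => (P (G.src e), P (G.tgt e)), fun _ => rfl, fun _ => rfl,
    fun _ => le_top, fun _ => le_top⟩

theorem LGraph.comp_toProps_eq [OrderTop W] {K G G' : LGraph W} (f : K ⟶ G) (g : K ⟶ G')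
    {P : G.V → Prop} {P' : G'.V → Prop} (h : ∀ k, P (homV f k) ↔ P' (homV g k)) :
    f ≫ G.toProps P = g ≫ G'.toProps P' := by
  have hV : ∀ k, P (homV f k) = P' (homV g k) := fun k => propext (h k)
  refine LGraph.hom_ext hV fun e => Prod.ext ?_ ?_
  · change P (G.src (homE f e)) = P' (G'.src (homE g e))
    rw [src_homE, src_homE, hV]
  · change P (G.tgt (homE f e)) = P' (G'.tgt (homE g e))
    rw [tgt_homE, tgt_homE, hV]

theorem GLHom.injective_homV_of_mono [OrderBot W] {G H : LGraph W} (f : G ⟶ H) [Mono f] :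
    Function.Injective (homV f) := fun a b hab =>
  homV_congr ((cancel_mono f).1 (LGraph.hom_ext (f := G.pointTo a ≫ f) (g := G.pointTo b ≫ f)
    (fun _ => hab) (·.elim))) PUnit.unit

theorem GLHom.injective_homE_of_mono [OrderBot W] {G H : LGraph W} (f : G ⟶ H) [Mono f] :
    Function.Injective (homE f) := by
  intro a b hab
  have hV : ∀ c : Bool,
      homV f (cond c (G.tgt a) (G.src a)) = homV f (cond c (G.tgt b) (G.src b)) := by
    rintro (_ | _)
    · change homV f (G.src a) = homV f (G.src b)
      rw [← src_homE, ← src_homE, hab]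
    · change homV f (G.tgt a) = homV f (G.tgt b)
      rw [← tgt_homE, ← tgt_homE, hab]
  exact homE_congr ((cancel_mono f).1 (LGraph.hom_ext (f := G.arrowTo a ≫ f)
    (g := G.arrowTo b ≫ f) hV fun _ => hab)) PUnit.unit

theorem GLHom.mono_of_injective {G H : LGraph W} (f : G ⟶ H)
    (hV : Function.Injective (homV f)) (hE : Function.Injective (homE f)) : Mono f :=
  ⟨fun _ _ h => LGraph.hom_ext (fun x => hV (homV_congr h x)) (fun e => hE (homE_congr h e))⟩

end TestGraphs

namespace CategoryTheory.IsPullback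

variable {W : Type} [Preorder W] [OrderBot W] {P A B C : LGraph W}
  {f : P ⟶ A} {g : P ⟶ B} {α : A ⟶ C} {β : B ⟶ C}

theorem exists_of_homV_eq (sq : IsPullback f g α β) {a : A.V} {b : B.V}
    (h : homV α a = homV β b) : ∃ p, homV f p = a ∧ homV g p = b := by
  have w : A.pointTo a ≫ α = B.pointTo b ≫ β := LGraph.hom_ext (fun _ => h) (·.elim)
  exact ⟨homV (sq.lift _ _ w) PUnit.unit, homV_congr (sq.lift_fst _ _ w) _,
    homV_congr (sq.lift_snd _ _ w) _⟩

theorem exists_of_homE_eq (sq : IsPullback f g α β) {a : A.E} {b : B.E}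
    (h : homE α a = homE β b) : ∃ p, homE f p = a ∧ homE g p = b := by
  have hV : ∀ c : Bool,
      homV α (cond c (A.tgt a) (A.src a)) = homV β (cond c (B.tgt b) (B.src b)) := by
    rintro (_ | _)
    · change homV α (A.src a) = homV β (B.src b)
      rw [← src_homE, ← src_homE, h]
    · change homV α (A.tgt a) = homV β (B.tgt b)
      rw [← tgt_homE, ← tgt_homE, h]
  have w : A.arrowTo a ≫ α = B.arrowTo b ≫ β := LGraph.hom_ext hV fun _ => h
  exact ⟨homE (sq.lift _ _ w) PUnit.unit, homE_congr (sq.lift_fst _ _ w) _,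
    homE_congr (sq.lift_snd _ _ w) _⟩

theorem eq_of_homV_eq (sq : IsPullback f g α β) {p p' : P.V}
    (hf : homV f p = homV f p') (hg : homV g p = homV g p') : p = p' :=
  homV_congr (sq.hom_ext (LGraph.hom_ext (f := P.pointTo p ≫ f) (g := P.pointTo p' ≫ f)
    (fun _ => hf) (·.elim)) (LGraph.hom_ext (f := P.pointTo p ≫ g) (g := P.pointTo p' ≫ g)
    (fun _ => hg) (·.elim))) PUnit.unit

theorem le_lV (sq : IsPullback f g α β) {p : P.V} {c : W}
    (hf : c ≤ A.lV (homV f p)) (hg : c ≤ B.lV (homV g p)) : c ≤ P.lV p := by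
  let lc := Function.update P.lV p c
  have hle : ∀ {Q : LGraph W} (φ : P ⟶ Q), c ≤ Q.lV (homV φ p) →
      ∀ q, lc q ≤ Q.lV (homV φ q) := by
    intro Q φ hp q
    rcases eq_or_ne q p with rfl | hq
    · simpa [lc] using hp
    · simpa [lc, hq] using lV_le_homV φ q
  let fc : P.withLV lc ⟶ A := f.withLV lc A.lV (hle f hf)
  let gc : P.withLV lc ⟶ B := g.withLV lc B.lV (hle g hg)
  have w : fc ≫ α = gc ≫ β := LGraph.hom_ext
    (fun x => (homV_congr sq.w x : homV α (homV f x) = homV β (homV g x)))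
    (fun e => (homE_congr sq.w e : homE α (homE f e) = homE β (homE g e)))
  have hp : homV (sq.lift fc gc w) p = p :=
    sq.eq_of_homV_eq (homV_congr (sq.lift_fst fc gc w) p) (homV_congr (sq.lift_snd fc gc w) p)
  have h : Function.update P.lV p c p ≤ P.lV (homV (sq.lift fc gc w) p) :=
    lV_le_homV (sq.lift fc gc w) p
  rwa [hp, Function.update_self] at h

theorem withLV (sq : IsPullback f g α β) {lP : P.V → W} {lA : A.V → W} {lB : B.V → W}
    {lC : C.V → W} (hf : ∀ p, lP p ≤ lA (homV f p)) (hg : ∀ p, lP p ≤ lB (homV g p))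
    (hα : ∀ a, lA a ≤ lC (homV α a)) (hβ : ∀ b, lB b ≤ lC (homV β b))
    (hP : ∀ p c, c ≤ lA (homV f p) → c ≤ lB (homV g p) → c ≤ lP p) :
    IsPullback (f.withLV lP lA hf) (g.withLV lP lB hg) (α.withLV lA lC hα)
      (β.withLV lB lC hβ) := by
  have w : f.withLV lP lA hf ≫ α.withLV lA lC hα = g.withLV lP lB hg ≫ β.withLV lB lC hβ :=
    LGraph.hom_ext (fun x => (homV_congr sq.w x : homV α (homV f x) = homV β (homV g x)))
      (fun e => (homE_congr sq.w e : homE α (homE f e) = homE β (homE g e)))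
  refine IsPullback.of_isLimit (Limits.PullbackCone.isLimitAux' (.mk _ _ w) fun s => ?_)
  -- forget the labels of the cone point, lift through `sq`, and restore them
  let T := s.pt
  let a : T.withLV ⊥ ⟶ A := s.fst.withLV ⊥ A.lV fun _ => bot_le
  let b : T.withLV ⊥ ⟶ B := s.snd.withLV ⊥ B.lV fun _ => bot_le
  have hab : a ≫ α = b ≫ β := LGraph.hom_ext
    (fun x => (homV_congr s.condition x : homV α (homV a x) = homV β (homV b x)))
    (fun e => (homE_congr s.condition e : homE α (homE a e) = homE β (homE b e)))
  set ψ := sq.lift a b hab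
  have hfst : ∀ x, homV f (homV ψ x) = homV s.fst x := homV_congr (sq.lift_fst a b hab)
  have hsnd : ∀ x, homV g (homV ψ x) = homV s.snd x := homV_congr (sq.lift_snd a b hab)
  have hfstE : ∀ e, homE f (homE ψ e) = homE s.fst e := homE_congr (sq.lift_fst a b hab)
  have hsndE : ∀ e, homE g (homE ψ e) = homE s.snd e := homE_congr (sq.lift_snd a b hab)
  refine ⟨ψ.withLV T.lV lP fun x => hP _ _ ?_ ?_, LGraph.hom_ext hfst hfstE,
    LGraph.hom_ext hsnd hsndE, fun {m} hm₁ hm₂ => ?_⟩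
  · rw [hfst]; exact lV_le_homV s.fst x
  · rw [hsnd]; exact lV_le_homV s.snd x
  let m₀ : T.withLV ⊥ ⟶ P := m.withLV ⊥ P.lV fun _ => bot_le
  have hm : m₀ = ψ := by
    refine sq.hom_ext (LGraph.hom_ext (fun x => ?_) (fun e => ?_))
      (LGraph.hom_ext (fun x => ?_) (fun e => ?_))
    · exact (homV_congr hm₁ x : homV f (homV m₀ x) = homV s.fst x).trans (hfst x).symm
    · exact (homE_congr hm₁ e : homE f (homE m₀ e) = homE s.fst e).trans (hfstE e).symm
    · exact (homV_congr hm₂ x : homV g (homV m₀ x) = homV s.snd x).trans (hsnd x).symm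
    · exact (homE_congr hm₂ e : homE g (homE m₀ e) = homE s.snd e).trans (hsndE e).symm
  exact LGraph.hom_ext (fun x => (homV_congr hm x : homV m₀ x = homV ψ x))
    (fun e => (homE_congr hm e : homE m₀ e = homE ψ e))

end CategoryTheory.IsPullback

namespace CategoryTheory.IsPushout

variable {W : Type} [Preorder W] [OrderTop W] {K R D H : LGraph W}
  {r : K ⟶ R} {u : K ⟶ D} {w : R ⟶ H} {g : D ⟶ H}

theorem exists_pred_desc (po : IsPushout r u w g) (PR : R.V → Prop) (PD : D.V → Prop)
    (h : ∀ k, PR (homV r k) ↔ PD (homV u k)) :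
    ∃ χ : H.V → Prop, (∀ x, χ (homV w x) = PR x) ∧ ∀ y, χ (homV g y) = PD y := by
  have hc := LGraph.comp_toProps_eq r u h
  exact ⟨homV (po.desc _ _ hc), homV_congr (po.inl_desc _ _ hc),
    homV_congr (po.inr_desc _ _ hc)⟩

theorem jointly_surjective (po : IsPushout r u w g) (z : H.V) :
    (∃ x, homV w x = z) ∨ ∃ y, homV g y = z := by
  let P : H.V → Prop := fun z => (∃ x, homV w x = z) ∨ ∃ y, homV g y = z
  have hP : H.toProps P = H.toProps fun _ => True := po.hom_ext
    (LGraph.comp_toProps_eq w w fun x => iff_true_intro (Or.inl ⟨x, rfl⟩))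
    (LGraph.comp_toProps_eq g g fun y => iff_true_intro (Or.inr ⟨y, rfl⟩))
  exact of_eq_true (homV_congr hP z)

theorem exists_of_homV_eq (po : IsPushout r u w g) (hu : Function.Injective (homV u))
    {x : R.V} {y : D.V} (h : homV w x = homV g y) : ∃ k, homV r k = x ∧ homV u k = y := by
  obtain ⟨χ, hχw, hχg⟩ :=
    po.exists_pred_desc (· = x) (fun y => ∃ k, homV r k = x ∧ homV u k = y)
    fun k => ⟨fun hk => ⟨k, hk, rfl⟩, fun ⟨k', hk', hkk'⟩ => hu hkk' ▸ hk'⟩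
  have hy : χ (homV g y) := by rw [← h, hχw]
  rwa [hχg] at hy

theorem eq_or_exists_of_homV_eq (po : IsPushout r u w g) (hu : Function.Injective (homV u))
    {y y' : D.V} (h : homV g y = homV g y') :
    y = y' ∨ ∃ k k', homV u k = y ∧ homV u k' = y' ∧ homV r k = homV r k' := by
  obtain ⟨χ, -, hχg⟩ := po.exists_pred_desc (fun x => ∃ k, homV r k = x ∧ homV u k = y)
    (fun y' => y' = y ∨ ∃ k k', homV u k = y ∧ homV u k' = y' ∧ homV r k = homV r k')
    fun k => ⟨fun ⟨k', hr, hu'⟩ => Or.inr ⟨k', k, hu', rfl, hr⟩, by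
      rintro (hk | ⟨k₁, k₂, hk₁, hk₂, hr⟩)
      · exact ⟨k, rfl, hk⟩
      · exact ⟨k₁, hu hk₂ ▸ hr, hk₁⟩⟩
  have hy : χ (homV g y') := by rw [← h, hχg]; exact Or.inl rfl
  rw [hχg] at hy
  exact hy.imp Eq.symm id

theorem lV_le (po : IsPushout r u w g) {z : H.V} {c : W}
    (hw : ∀ x, homV w x = z → R.lV x ≤ c) (hg : ∀ y, homV g y = z → D.lV y ≤ c) :
    H.lV z ≤ c := by
  let lc := Function.update H.lV z c
  have hle : ∀ {Q : LGraph W} (φ : Q ⟶ H), (∀ q, homV φ q = z → Q.lV q ≤ c) →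
      ∀ q, Q.lV q ≤ lc (homV φ q) := by
    intro Q φ hz q
    by_cases hq : homV φ q = z
    · simpa [lc, hq] using hz q hq
    · simpa [lc, hq] using lV_le_homV φ q
  let wc : R ⟶ H.withLV lc := w.withLV R.lV lc (hle w hw)
  let gc : D ⟶ H.withLV lc := g.withLV D.lV lc (hle g hg)
  have hc : r ≫ wc = u ≫ gc := LGraph.hom_ext
    (fun k => (homV_congr po.w k : homV w (homV r k) = homV g (homV u k)))
    (fun e => (homE_congr po.w e : homE w (homE r e) = homE g (homE u e)))
  have hz : homV (po.desc wc gc hc) z = z := by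
    rcases po.jointly_surjective z with ⟨x, rfl⟩ | ⟨y, rfl⟩
    · exact homV_congr (po.inl_desc wc gc hc) x
    · exact homV_congr (po.inr_desc wc gc hc) y
  have h : H.lV z ≤ Function.update H.lV z c (homV (po.desc wc gc hc) z : (H.withLV lc).V) :=
    lV_le_homV (po.desc wc gc hc) z
  rwa [hz, Function.update_self] at h

theorem withLV (po : IsPushout r u w g) {lK : K.V → W} {lR : R.V → W} {lD : D.V → W}
    {lH : H.V → W} (hr : ∀ k, lK k ≤ lR (homV r k)) (hu : ∀ k, lK k ≤ lD (homV u k))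
    (hw : ∀ x, lR x ≤ lH (homV w x)) (hg : ∀ y, lD y ≤ lH (homV g y))
    (hH : ∀ z c, (∀ x, homV w x = z → lR x ≤ c) → (∀ y, homV g y = z → lD y ≤ c) →
      lH z ≤ c) :
    IsPushout (r.withLV lK lR hr) (u.withLV lK lD hu) (w.withLV lR lH hw)
      (g.withLV lD lH hg) := by
  have hc : r.withLV lK lR hr ≫ w.withLV lR lH hw = u.withLV lK lD hu ≫ g.withLV lD lH hg :=
    LGraph.hom_ext (fun k => (homV_congr po.w k : homV w (homV r k) = homV g (homV u k)))
      (fun e => (homE_congr po.w e : homE w (homE r e) = homE g (homE u e)))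
  refine IsPushout.of_isColimit (Limits.PushoutCocone.isColimitAux' (.mk _ _ hc) fun s => ?_)
  -- raise the labels of the cocone point to `⊤`, descend through `po`, and restore them
  let Q := s.pt
  let a : R ⟶ Q.withLV ⊤ := s.inl.withLV R.lV ⊤ fun _ => le_top
  let b : D ⟶ Q.withLV ⊤ := s.inr.withLV D.lV ⊤ fun _ => le_top
  have hab : r ≫ a = u ≫ b := LGraph.hom_ext
    (fun k => (homV_congr s.condition k : homV a (homV r k) = homV b (homV u k)))
    (fun e => (homE_congr s.condition e : homE a (homE r e) = homE b (homE u e)))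
  set δ := po.desc a b hab
  have hinl : ∀ x, homV δ (homV w x) = homV s.inl x := homV_congr (po.inl_desc a b hab)
  have hinr : ∀ y, homV δ (homV g y) = homV s.inr y := homV_congr (po.inr_desc a b hab)
  have hinlE : ∀ e, homE δ (homE w e) = homE s.inl e := homE_congr (po.inl_desc a b hab)
  have hinrE : ∀ e, homE δ (homE g e) = homE s.inr e := homE_congr (po.inr_desc a b hab)
  refine ⟨δ.withLV lH Q.lV fun z => hH z _ ?_ ?_, LGraph.hom_ext hinl hinlE,
    LGraph.hom_ext hinr hinrE, fun {m} hm₁ hm₂ => ?_⟩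
  · rintro x rfl; rw [hinl]; exact lV_le_homV s.inl x
  · rintro y rfl; rw [hinr]; exact lV_le_homV s.inr y
  let m₀ : H ⟶ Q.withLV ⊤ := m.withLV H.lV ⊤ fun _ => le_top
  have hm : m₀ = δ := by
    refine po.hom_ext (LGraph.hom_ext (fun x => ?_) (fun e => ?_))
      (LGraph.hom_ext (fun y => ?_) (fun e => ?_))
    · exact (homV_congr hm₁ x : homV m₀ (homV w x) = homV s.inl x).trans (hinl x).symm
    · exact (homE_congr hm₁ e : homE m₀ (homE w e) = homE s.inl e).trans (hinlE e).symm
    · exact (homV_congr hm₂ y : homV m₀ (homV g y) = homV s.inr y).trans (hinr y).symm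
    · exact (homE_congr hm₂ e : homE m₀ (homE g e) = homE s.inr e).trans (hinrE e).symm
  exact LGraph.hom_ext (fun z => (homV_congr hm z : homV m₀ z = homV δ z))
    (fun e => (homE_congr hm e : homE m₀ e = homE δ e))

end CategoryTheory.IsPushout

namespace RewriteStep

variable {W : Type} [Preorder W] [OrderBot W] [OrderTop W] {ρ : PBPORule W} {G H : LGraph W}

def withLV (st : RewriteStep ρ G H) (lG : G.V → W) (lGK : st.GK.V → W) (lH : H.V → W)
    (hm : ∀ x, ρ.L.lV x ≤ lG (homV st.m x)) (hα : ∀ a, lG a ≤ ρ.L'.lV (homV st.α a))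
    (hgL : ∀ y, lGK y ≤ lG (homV st.gL y)) (hu' : ∀ y, lGK y ≤ ρ.K'.lV (homV st.u' y))
    (hu : ∀ k, ρ.K.lV k ≤ lGK (homV st.u k)) (hw : ∀ x, ρ.R.lV x ≤ lH (homV st.w x))
    (hgR : ∀ y, lGK y ≤ lH (homV st.gR y))
    (hGK : ∀ y c, c ≤ lG (homV st.gL y) → c ≤ ρ.K'.lV (homV st.u' y) → c ≤ lGK y)
    (hH : ∀ z c, (∀ x, homV st.w x = z → ρ.R.lV x ≤ c) →
      (∀ y, homV st.gR y = z → lGK y ≤ c) → lH z ≤ c) :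
    RewriteStep ρ (G.withLV lG) (H.withLV lH) where
  m := st.m.withLV ρ.L.lV lG hm
  mono_m :=
    have := st.mono_m
    GLHom.mono_of_injective _ (GLHom.injective_homV_of_mono st.m)
      (GLHom.injective_homE_of_mono st.m)
  α := st.α.withLV lG ρ.L'.lV hα
  matchPB := st.matchPB.withLV (fun _ => le_rfl) hm (lV_le_homV ρ.tL) hα fun _ _ h _ => h
  GK := st.GK.withLV lGK
  gL := st.gL.withLV lGK lG hgL
  u' := st.u'.withLV lGK ρ.K'.lV hu'
  pbK := st.pbK.withLV hgL hu' hα (lV_le_homV ρ.l') hGK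
  u := st.u.withLV ρ.K.lV lGK hu
  u_u' := LGraph.hom_ext
    (fun k => (homV_congr st.u_u' k : homV st.u' (homV st.u k) = homV ρ.tK k))
    (fun e => (homE_congr st.u_u' e : homE st.u' (homE st.u e) = homE ρ.tK e))
  u_gL := LGraph.hom_ext
    (fun k => (homV_congr st.u_gL k : homV st.gL (homV st.u k) = homV st.m (homV ρ.l k)))
    (fun e => (homE_congr st.u_gL e : homE st.gL (homE st.u e) = homE st.m (homE ρ.l e)))
  w := st.w.withLV ρ.R.lV lH hw
  gR := st.gR.withLV lGK lH hgR
  po := st.po.withLV (lV_le_homV ρ.r) hu hw hgR hH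

end RewriteStep

section RuleEncoding

variable {S : Type} {ar : S → ℕ} {X : Type}

abbrev Term.SymVertex (t : Term S ar X) : Type := {p : List ℕ // (t.symAt p).isSome}

theorem Term.encE_ext {t : Term S ar X} {e e' : t.encE}
    (h : e.1.1 ++ [e.1.2] = e'.1.1 ++ [e'.1.2]) : e = e' := by
  obtain ⟨h₁, h₂⟩ := List.append_inj' h rfl
  exact Subtype.ext (Prod.ext h₁ (List.singleton_injective h₂))

theorem Term.encTgt_of_isSome {t : Term S ar X} {e : t.encE}
    (h : (t.symAt (e.1.1 ++ [e.1.2])).isSome) : t.encTgt e = Sum.inl ⟨_, h⟩ :=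
  dif_pos h

theorem Term.encTgt_of_not_isSome {t : Term S ar X} {e : t.encE}
    (h : ¬ (t.symAt (e.1.1 ++ [e.1.2])).isSome) :
    ∃ x, t.encTgt e = Sum.inr x ∧ t.sub? (e.1.1 ++ [e.1.2]) = some (.var x.1) :=
  ⟨_, dif_neg h, Classical.choose_spec (t.edge_tgt_var e.2 h)⟩

theorem Term.encTgt_injective_s18 {t : Term S ar X} (ht : t.Linear) :
    Function.Injective t.encTgt := by
  intro e e' h
  by_cases h₁ : (t.symAt (e.1.1 ++ [e.1.2])).isSome <;>
    by_cases h₂ : (t.symAt (e'.1.1 ++ [e'.1.2])).isSome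
  · rw [encTgt_of_isSome h₁, encTgt_of_isSome h₂] at h
    exact encE_ext (congrArg Subtype.val (Sum.inl_injective h))
  · obtain ⟨x, hx, -⟩ := encTgt_of_not_isSome h₂
    rw [encTgt_of_isSome h₁, hx] at h
    exact absurd h Sum.inl_ne_inr
  · obtain ⟨x, hx, -⟩ := encTgt_of_not_isSome h₁
    rw [encTgt_of_isSome h₂, hx] at h
    exact absurd h Sum.inr_ne_inl
  · obtain ⟨x, hx, hsub⟩ := encTgt_of_not_isSome h₁
    obtain ⟨x', hx', hsub'⟩ := encTgt_of_not_isSome h₂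
    rw [hx, hx'] at h
    obtain rfl := Sum.inr_injective h
    exact encE_ext (ht _ _ _ hsub hsub')

variable (ρ : TRSRule S ar X)

theorem TRSRule.lhs_symAt_nil_isSome : (ρ.lhs.symAt []).isSome := by
  cases h : ρ.lhs with
  | var x => exact absurd h (ρ.lhs_not_var x)
  | app f ts => simp [Term.symAt, Term.sub?, Term.head?]

theorem TRSRule.lhs_encRoot : ρ.lhs.encRoot = Sum.inl ⟨[], ρ.lhs_symAt_nil_isSome⟩ :=
  dif_pos ρ.lhs_symAt_nil_isSome

theorem TRSRule.lhs_encTgt_ne_encRoot (e : ρ.lhs.encE) : ρ.lhs.encTgt e ≠ ρ.lhs.encRoot := by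
  rw [ρ.lhs_encRoot]
  by_cases h : (ρ.lhs.symAt (e.1.1 ++ [e.1.2])).isSome
  · rw [Term.encTgt_of_isSome h]
    intro h'
    simpa using congrArg Subtype.val (Sum.inl_injective h')
  · obtain ⟨x, hx, -⟩ := Term.encTgt_of_not_isSome h
    rw [hx]
    exact Sum.inr_ne_inl

theorem ruleEnc_L'_lV_sym (q : ρ.lhs.SymVertex) :
    (ruleEnc ρ).L'.lV (Sum.inl (Sum.inl (Sum.inl q))) =
      (ρ.lhs.symAt q.1).elim Flat.bot (fun f => Flat.el (Sum.inl f)) :=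
  if_neg (by rintro ⟨x, hx⟩; cases hx)

theorem ruleEnc_L'_lV_sym_ne_top (q : ρ.lhs.SymVertex) :
    (ruleEnc ρ).L'.lV (Sum.inl (Sum.inl (Sum.inl q))) ≠ Flat.top := by
  obtain ⟨f, hf⟩ := Option.isSome_iff_exists.mp q.2
  simp [ruleEnc_L'_lV_sym, hf]

theorem ruleEnc_L'_lV_encRoot_ne_top :
    (ruleEnc ρ).L'.lV (Sum.inl (Sum.inl ρ.lhs.encRoot)) ≠ Flat.top := by
  rw [ρ.lhs_encRoot]
  exact ruleEnc_L'_lV_sym_ne_top ρ _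

theorem ruleEnc_L'_eq_sym_of_lV_ne_top {z : (ruleEnc ρ).L'.V}
    (h : (ruleEnc ρ).L'.lV z ≠ Flat.top) : ∃ q, z = Sum.inl (Sum.inl (Sum.inl q)) := by
  rcases z with (((q | x) | x') | c)
  · exact ⟨q, rfl⟩
  · exact absurd (if_pos ⟨x, rfl⟩) h
  all_goals exact absurd rfl h

theorem ruleEnc_L_lV_eq_bot_of_top {x : ρ.lhs.encV}
    (h : (ruleEnc ρ).L'.lV (homV (ruleEnc ρ).tL x) = Flat.top) :
    (ruleEnc ρ).L.lV x = Flat.bot := by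
  rcases x with q | x
  · exact absurd h (ruleEnc_L'_lV_sym_ne_top ρ q)
  · rfl

theorem ruleEnc_K'_lV_eq_top {z : (ruleEnc ρ).K'.V} (h : z ≠ homV (ruleEnc ρ).tK (Sum.inr ())) :
    (ruleEnc ρ).K'.lV z = Flat.top := by
  rcases z with (((x | _) | _) | _)
  · exact if_pos ⟨x, rfl⟩
  · exact absurd rfl h
  all_goals rfl

theorem ruleEnc_K'_lV_root : (ruleEnc ρ).K'.lV (homV (ruleEnc ρ).tK (Sum.inr ())) = Flat.bot :=
  if_neg (by rintro ⟨x, hx⟩; cases hx)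

theorem ruleEnc_L'_src_eq_sym {e : (ruleEnc ρ).L'.E} {q : ρ.lhs.SymVertex}
    (h : (ruleEnc ρ).L'.src e = Sum.inl (Sum.inl (Sum.inl q))) :
    ∃ e₀ : ρ.lhs.encE, e = homE (ruleEnc ρ).tL e₀ ∧ e₀.1.1 = q.1 := by
  rcases e with ((e₀ | (x | x)) | c)
  · exact ⟨e₀, rfl, congrArg Subtype.val (Sum.inl_injective (Sum.inl_injective
      (Sum.inl_injective h)))⟩
  · obtain ⟨y, hy⟩ := x.2
    have h' := Sum.inl_injective (Sum.inl_injective h)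
    rw [← hy] at h'
    exact absurd h' Sum.inr_ne_inl
  · exact absurd (Sum.inl_injective h) Sum.inr_ne_inl
  · exact absurd h Sum.inr_ne_inl

theorem ruleEnc_L'_tgt_eq {e : (ruleEnc ρ).L'.E} {x : ρ.lhs.encV} (hx : x ≠ ρ.lhs.encRoot)
    (h : (ruleEnc ρ).L'.tgt e = homV (ruleEnc ρ).tL x) :
    ∃ e₀ : ρ.lhs.encE, e = homE (ruleEnc ρ).tL e₀ ∧ ρ.lhs.encTgt e₀ = x := by
  rcases e with ((e₀ | (_ | _)) | (_ | _))
  · exact ⟨e₀, rfl, Sum.inl_injective (Sum.inl_injective h)⟩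
  · exact absurd (Sum.inl_injective h) Sum.inr_ne_inl
  · exact absurd (Sum.inl_injective h) Sum.inr_ne_inl
  · exact absurd h Sum.inr_ne_inl
  · exact absurd (Sum.inl_injective (Sum.inl_injective h)).symm hx

end RuleEncoding

namespace RewriteStep

variable {S : Type} {ar : S → ℕ} {X : Type} {ρ : TRSRule S ar X} {G H : LGraph (FlatL S)}
  (st : RewriteStep (ruleEnc ρ) G H)

theorem homV_α_m (x : ρ.lhs.encV) : homV st.α (homV st.m x) = homV (ruleEnc ρ).tL x :=
  (homV_congr st.matchPB.w x).symm

theorem homE_α_m (e : ρ.lhs.encE) : homE st.α (homE st.m e) = homE (ruleEnc ρ).tL e :=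
  (homE_congr st.matchPB.w e).symm

theorem homV_m_of_homV_α {a : G.V} {x : ρ.lhs.encV}
    (h : homV st.α a = homV (ruleEnc ρ).tL x) : homV st.m x = a := by
  obtain ⟨p, rfl, hp⟩ := st.matchPB.exists_of_homV_eq h.symm
  exact hp

theorem homE_m_of_homE_α {a : G.E} {e : ρ.lhs.encE}
    (h : homE st.α a = homE (ruleEnc ρ).tL e) : homE st.m e = a := by
  obtain ⟨p, rfl, hp⟩ := st.matchPB.exists_of_homE_eq h.symm
  exact hp

theorem outWF_of_homV_α_eq {v : G.V} {q : ρ.lhs.SymVertex}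
    (hq : homV st.α v = Sum.inl (Sum.inl (Sum.inl q))) : OutWF G ar v := by
  have := st.mono_m
  obtain ⟨f, hf⟩ := Option.isSome_iff_exists.mp q.2
  have hmv : homV st.m (Sum.inl q) = v := st.homV_m_of_homV_α hq
  let arg : Fin (ar f) → ρ.lhs.encE := fun i => ⟨(q.1, i), f, hf, i.2⟩
  have hsrc : ∀ i, G.src (homE st.m (arg i)) = v := fun i => (src_homE st.m _).trans hmv
  refine ⟨f, ?_, Equiv.ofBijective (fun i => ⟨homE st.m (arg i), hsrc i⟩) ⟨?_, ?_⟩,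
    fun i => ?_⟩
  · refine Flat.eq_of_el_le_of_le_el ?_ ?_
    · have hL : (ruleEnc ρ).L.lV (Sum.inl q) = Flat.el (Sum.inl f) := by
        change (ρ.lhs.symAt q.1).elim _ _ = _
        rw [hf]; rfl
      simpa only [hL, hmv] using lV_le_homV st.m (Sum.inl q)
    · have h := lV_le_homV st.α v
      rw [hq] at h
      exact h.trans_eq ((ruleEnc_L'_lV_sym ρ q).trans (by rw [hf]; rfl))
  · intro i j hij
    exact Fin.ext (congrArg (fun e : ρ.lhs.encE => e.1.2)
      (GLHom.injective_homE_of_mono st.m (congrArg Subtype.val hij)))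
  · rintro ⟨e, he⟩
    obtain ⟨e₀, he₀, hq₀⟩ := ruleEnc_L'_src_eq_sym ρ (by rw [src_homE, he, hq])
    obtain ⟨f', hf', hi⟩ := e₀.2
    obtain rfl : f' = f := Option.some_injective _ ((hq₀ ▸ hf').symm.trans hf)
    have harg : arg ⟨e₀.1.2, hi⟩ = e₀ := Subtype.ext (Prod.ext hq₀.symm rfl)
    refine ⟨⟨e₀.1.2, hi⟩, Subtype.ext ?_⟩
    change homE st.m (arg _) = e
    rw [harg]
    exact st.homE_m_of_homE_α he₀
  · change G.lE (homE st.m (arg i)) = _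
    refine Flat.eq_of_el_le_of_le_el (lE_le_homE st.m (arg i)) ?_
    exact (lE_le_homE st.α _).trans_eq (by rw [homE_α_m]; rfl)

theorem inWF_of_homV_α_eq (hlin : ρ.lhs.Linear) {t : G.V} {x : ρ.lhs.encV}
    (hx : x ≠ ρ.lhs.encRoot) (ht : homV st.α t = homV (ruleEnc ρ).tL x) : InWF G t := by
  have incoming :
      ∀ e, G.tgt e = t → ∃ e₀, homE st.m e₀ = e ∧ ρ.lhs.encTgt e₀ = x := by
    intro e he
    obtain ⟨e₀, he₀, hx₀⟩ := ruleEnc_L'_tgt_eq ρ hx (by rw [tgt_homE, he, ht])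
    exact ⟨e₀, st.homE_m_of_homE_α he₀, hx₀⟩
  intro e e' he he'
  obtain ⟨e₀, rfl, hx₀⟩ := incoming e he
  obtain ⟨e₀', rfl, hx₀'⟩ := incoming e' he'
  rw [Term.encTgt_injective_s18 hlin (hx₀.trans hx₀'.symm)]

theorem lV_α_eq_top_of_not_good (hlin : ρ.lhs.Linear) {v : G.V} (hv : ¬ Good G ar v) :
    (ruleEnc ρ).L'.lV (homV st.α v) = Flat.top := by
  by_contra h
  obtain ⟨q, hq⟩ := ruleEnc_L'_eq_sym_of_lV_ne_top ρ h
  refine hv ⟨st.outWF_of_homV_α_eq hq, fun e he => ?_⟩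
  obtain ⟨e₀, he₀, -⟩ := ruleEnc_L'_src_eq_sym ρ (by rw [src_homE, he, hq])
  exact st.inWF_of_homV_α_eq hlin (ρ.lhs_encTgt_ne_encRoot e₀)
    (by rw [← tgt_homE, he₀]; rfl)

theorem homV_gL_u (k : (ruleEnc ρ).K.V) :
    homV st.gL (homV st.u k) = homV st.m (homV (ruleEnc ρ).l k) :=
  homV_congr st.u_gL k

theorem homV_u'_u (k : (ruleEnc ρ).K.V) : homV st.u' (homV st.u k) = homV (ruleEnc ρ).tK k :=
  homV_congr st.u_u' k

theorem homV_α_gL (y : st.GK.V) :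
    homV st.α (homV st.gL y) = homV (ruleEnc ρ).l' (homV st.u' y) :=
  homV_congr st.pbK.w y

theorem homV_u_injective : Function.Injective (homV st.u) := fun a b h => by
  have h' := congrArg (homV st.u') h
  rw [homV_u'_u, homV_u'_u] at h'
  exact Sum.inl_injective (Sum.inl_injective h')

theorem lV_u_root : st.GK.lV (homV st.u (Sum.inr ())) = Flat.bot :=
  Flat.eq_bot_of_le_bot ((lV_le_homV st.u' _).trans_eq
    ((congrArg _ (st.homV_u'_u _)).trans (ruleEnc_K'_lV_root ρ)))

section BadVertex

variable {v : G.V} (l : FlatL S)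

/-- The root of `K` is matched onto the root of `l°`, a symbol vertex, whose label in `L'` is
not `⊤`. -/
theorem eq_inl_of_homV_gL_u_eq (hv : (ruleEnc ρ).L'.lV (homV st.α v) = Flat.top)
    {k : (ruleEnc ρ).K.V} (hk : homV st.gL (homV st.u k) = v) : ∃ x, k = Sum.inl x := by
  rcases k with x | ⟨⟨⟩⟩
  · exact ⟨x, rfl⟩
  · have h : homV st.α v = Sum.inl (Sum.inl ρ.lhs.encRoot) := by
      rw [← hk]
      exact (congrArg _ (st.homV_gL_u _)).trans (st.homV_α_m _)
    exact absurd (h ▸ hv) (ruleEnc_L'_lV_encRoot_ne_top ρ)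

theorem lV_le_relabelV_m (hv : (ruleEnc ρ).L'.lV (homV st.α v) = Flat.top)
    (x : ρ.lhs.encV) : (ruleEnc ρ).L.lV x ≤ (relabelV G v l).lV (homV st.m x : G.V) := by
  rw [relabelV_lV]
  rcases eq_or_ne (homV st.m x) v with hx | hx
  · rw [ruleEnc_L_lV_eq_bot_of_top ρ (by rw [← st.homV_α_m, hx, hv])]
    exact bot_le
  · rw [Function.update_of_ne hx]
    exact lV_le_homV st.m x

theorem relabelV_lV_le_α (hv : (ruleEnc ρ).L'.lV (homV st.α v) = Flat.top) (a : G.V) :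
    (relabelV G v l).lV a ≤ (ruleEnc ρ).L'.lV (homV st.α a) := by
  rcases eq_or_ne a v with rfl | ha
  · rw [hv]
    exact le_top
  · rw [relabelV_lV, Function.update_of_ne ha]
    exact lV_le_homV st.α a

theorem relabelSet_lV_le_gL (y : st.GK.V) :
    (relabelSet st.GK (homV st.gL ⁻¹' {v}) l).lV y ≤
      (relabelV G v l).lV (homV st.gL y : G.V) := by
  rw [relabelSet_lV, relabelV_lV]
  split_ifs with hy
  · rw [(hy : homV st.gL y = v), Function.update_self]
  · rw [Function.update_of_ne hy]
    exact lV_le_homV st.gL y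

theorem relabelSet_lV_le_u' (hv : (ruleEnc ρ).L'.lV (homV st.α v) = Flat.top) (y : st.GK.V) :
    (relabelSet st.GK (homV st.gL ⁻¹' {v}) l).lV y ≤ (ruleEnc ρ).K'.lV (homV st.u' y) := by
  rw [relabelSet_lV]
  split_ifs with hy
  · rw [ruleEnc_K'_lV_eq_top ρ fun h => ruleEnc_L'_lV_encRoot_ne_top ρ ?_]
    · exact le_top
    · rw [← hv, ← (hy : homV st.gL y = v), st.homV_α_gL, h]
      rfl
  · exact lV_le_homV st.u' y

theorem lV_le_relabelSet_w (hv : (ruleEnc ρ).L'.lV (homV st.α v) = Flat.top)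
    (x : (ruleEnc ρ).R.V) :
    (ruleEnc ρ).R.lV x ≤
      (relabelSet H (homV st.gR '' (homV st.gL ⁻¹' {v})) l).lV (homV st.w x : H.V) := by
  rw [relabelSet_lV]
  split_ifs with hx
  · obtain ⟨y, hy, hxy⟩ := hx
    obtain ⟨k, rfl, rfl⟩ := st.po.exists_of_homV_eq st.homV_u_injective hxy.symm
    obtain ⟨x, rfl⟩ := st.eq_inl_of_homV_gL_u_eq hv hy
    exact Flat.bot_le l
  · exact lV_le_homV st.w x

/-- `g_R` glues a vertex over `v` only to the image of the root of `K`, which is `⊥`-labeled. -/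
theorem relabelSet_lV_le_gR (hv : (ruleEnc ρ).L'.lV (homV st.α v) = Flat.top) (y : st.GK.V) :
    (relabelSet st.GK (homV st.gL ⁻¹' {v}) l).lV y ≤
      (relabelSet H (homV st.gR '' (homV st.gL ⁻¹' {v})) l).lV (homV st.gR y : H.V) := by
  rw [relabelSet_lV, relabelSet_lV]
  by_cases hy : y ∈ homV st.gL ⁻¹' {v}
  · rw [if_pos hy, if_pos ⟨y, hy, rfl⟩]
  rw [if_neg hy]
  split_ifs with hyU
  · obtain ⟨y', hy', hyy'⟩ := hyU
    rcases st.po.eq_or_exists_of_homV_eq st.homV_u_injective hyy' with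
      rfl | ⟨k', k, rfl, rfl, hr⟩
    · exact absurd hy' hy
    obtain ⟨x', rfl⟩ := st.eq_inl_of_homV_gL_u_eq hv hy'
    rcases k with x | ⟨⟩
    · obtain rfl : x' = x := Sum.inr_injective hr
      exact absurd hy' hy
    · exact st.lV_u_root.trans_le (Flat.bot_le l)
  · exact lV_le_homV st.gR y

theorem le_relabelSet_lV_of_le (y : st.GK.V) (c : FlatL S)
    (hG : c ≤ (relabelV G v l).lV (homV st.gL y : G.V))
    (hK' : c ≤ (ruleEnc ρ).K'.lV (homV st.u' y)) :
    c ≤ (relabelSet st.GK (homV st.gL ⁻¹' {v}) l).lV y := by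
  rw [relabelSet_lV]; rw [relabelV_lV] at hG
  split_ifs with hy
  · rwa [(hy : homV st.gL y = v), Function.update_self] at hG
  · rw [Function.update_of_ne hy] at hG
    exact st.pbK.le_lV hG hK'

theorem relabelSet_lV_le_of_le (z : H.V) (c : FlatL S)
    (hR : ∀ x, homV st.w x = z → (ruleEnc ρ).R.lV x ≤ c)
    (hGK : ∀ y, homV st.gR y = z → (relabelSet st.GK (homV st.gL ⁻¹' {v}) l).lV y ≤ c) :
    (relabelSet H (homV st.gR '' (homV st.gL ⁻¹' {v})) l).lV z ≤ c := by
  rw [relabelSet_lV]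
  split_ifs with hz
  · obtain ⟨y, hy, rfl⟩ := hz
    simpa only [relabelSet_lV, if_pos hy] using hGK y rfl
  · refine st.po.lV_le hR fun y hy => ?_
    have hyY : y ∉ homV st.gL ⁻¹' {v} := fun h => hz ⟨y, h, hy⟩
    simpa only [relabelSet_lV, if_neg hyY] using hGK y hy

end BadVertex

end RewriteStep

theorem statement_18_general {S : Type} {ar : S → ℕ} {X : Type}
    (ρ : TRSRule S ar X) (hρ : ρ.Linear) (G H : LGraph (FlatL S))
    (st : RewriteStep (ruleEnc ρ) G H)
    (v : G.V) (hbad : ¬ Good G ar v) (l : FlatL S) :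
    ∃ st' : RewriteStep (ruleEnc ρ) (relabelV G v l)
        (relabelSet H {u : H.V | ∃ y : st.GK.V, homV st.gL y = v ∧ homV st.gR y = u} l),
      homV st'.α = homV st.α ∧ homE st'.α = homE st.α := by
  have hv := st.lV_α_eq_top_of_not_good hρ.1 hbad
  exact ⟨st.withLV (relabelV G v l).lV (relabelSet st.GK (homV st.gL ⁻¹' {v}) l).lV
    (relabelSet H (homV st.gR '' (homV st.gL ⁻¹' {v})) l).lV
    (st.lV_le_relabelV_m l hv) (st.relabelV_lV_le_α l hv) (st.relabelSet_lV_le_gL l)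
    (st.relabelSet_lV_le_u' l hv) (fun _ => bot_le) (st.lV_le_relabelSet_w l hv)
    (st.relabelSet_lV_le_gR l hv) (st.le_relabelSet_lV_of_le l) (st.relabelSet_lV_le_of_le l),
    rfl, rfl⟩

/-- Bad node labels are irrelevant. For every bad vertex `v` of a
finite `Σ°`-labeled graph `G` and every label `l ∈ Σ°`: if `G ⇒ H` is a PBPO⁺
rewrite step via the rule encoding `ρ°` of a linear term rewrite rule `ρ` with
adherence morphism `α`, then `G^[ℓ(v):=l] ⇒ H^[ℓ(v):=l]` is a PBPO⁺ rewrite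
step via `ρ°` with the same adherence morphism (`H`'s copy of `v`, if any, is
the `g_R`-image of the `g_L`-preimage of `v`). -/
theorem statement_18 {S : Type} {ar : S → ℕ} {X : Type}
    (ρ : TRSRule S ar X) (hρ : ρ.Linear) (G H : LGraph (FlatL S))
    (hfin : FiniteG G) (st : RewriteStep (ruleEnc ρ) G H)
    (v : G.V) (hbad : ¬ Good G ar v) (l : FlatL S) :
    ∃ st' : RewriteStep (ruleEnc ρ) (relabelV G v l)
        (relabelSet H {u : H.V | ∃ y : st.GK.V, homV st.gL y = v ∧ homV st.gR y = u} l),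
      homV st'.α = homV st.α ∧ homE st'.α = homE st.α :=
  statement_18_general ρ hρ G H st v hbad l
end
end
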